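/- arXiv:2509.16069 — 4 statements merged into one kernel-verified Lean document; each statement's English description precedes it below -/
import Mathlib

section
/- Let G be a group and C ⊆ G a finite conjugacy class of G such that every element of C is an involution, C generates G, and the canonical homomorphism sending e_a to a, from the presented group with generating set {e_a : a ∈ C} and relations e_a e_b e_a^{-1} = e_{aba^{-1}} (for all a,b ∈ C) together with e_{a_0}^2 = 1 for one fixed a_0 ∈ C, onto G, is an isomorphism (i.e. G has a C̄-presentation of class 2 with generator set C). Then, in the ring ℤ⟦t⟧ of formal power series, (1 − t^2) · 𝒢_{As(C)}(t) = (1 + t^2) · 𝒢_{G,C}(t) + t · (1 − t^2) · D(𝒢_{G,C})(t), where D denotes the formal derivative of power series. -/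
/-- Relators `e_x e_y (e_{x ▷ y} e_x)⁻¹` of the structure group of a solution `(X, x ▷ y)`. -/
def structureGroupRels {X : Type} (op : X → X → X) : Set (FreeGroup X) :=
  {r | ∃ x y : X, r = FreeGroup.of x * FreeGroup.of y *
      (FreeGroup.of (op x y) * FreeGroup.of x)⁻¹}

/-- Word length of `h` with respect to a set `S` of generators and their inverses. -/
noncomputable def wordLength {H : Type} [Group H] (S : Set H) (h : H) : ℕ :=
  sInf {n | ∃ L : List H,
    L.length = n ∧ (∀ x ∈ L, x ∈ S ∨ x⁻¹ ∈ S) ∧ L.prod = h}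

/-- Growth series of a group with respect to a generating set `S`
(the `n`-th coefficient counts elements of word length `n`). -/
noncomputable def growthSeries {H : Type} [Group H] (S : Set H) : PowerSeries ℤ :=
  PowerSeries.mk fun n => (Set.ncard {h : H | wordLength S h = n} : ℤ)

/-- Length of `g ∈ G` as the least number of elements of `C` whose product is `g`. -/
noncomputable def lengthWrt {G : Type} [Group G] (C : Set G) (g : G) : ℕ :=
  sInf {n | ∃ L : List G, L.length = n ∧ (∀ x ∈ L, x ∈ C) ∧ L.prod = g}

/-- Growth series of `G` with respect to the set `C`. -/
noncomputable def growthSeriesWrt {G : Type} [Group G] (C : Set G) : PowerSeries ℤ :=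
  PowerSeries.mk fun n => (Set.ncard {g : G | lengthWrt C g = n} : ℤ)




section AuxLemmas

lemma intCast_zmod2_eq_iff (a b : ℤ) : ((a : ZMod 2) = (b : ZMod 2)) ↔ a % 2 = b % 2 := by
  rw [ZMod.intCast_eq_intCast_iff]
  exact Iff.rfl

/-- Lists of a given length with entries in a finite set form a finite set. -/
lemma finite_lists {α : Type*} {C : Set α} (h : C.Finite) (n : ℕ) :
    {L : List α | L.length = n ∧ ∀ x ∈ L, x ∈ C}.Finite := by
  induction n with
  | zero =>
    apply Set.Finite.subset (Set.finite_singleton ([] : List α))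
    rintro L ⟨hL, -⟩
    simp [List.length_eq_zero_iff.mp hL]
  | succ n ih =>
    apply Set.Finite.subset ((h.prod ih).image (fun p => p.1 :: p.2))
    rintro L ⟨hL, hmem⟩
    cases L with
    | nil => simp at hL
    | cons a t =>
      refine ⟨(a, t), Set.mem_prod.mpr ⟨hmem a (by simp), ?_, ?_⟩, rfl⟩
      · simpa using hL
      · exact fun x hx => hmem x (by simp [hx])

lemma ncard_prod' {α β : Type*} (s : Set α) (t : Set β) :
    (s ×ˢ t).ncard = s.ncard * t.ncard := by
  rw [← Nat.card_coe_set_eq, ← Nat.card_coe_set_eq, ← Nat.card_coe_set_eq,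
    ← Nat.card_prod]
  exact Nat.card_congr (Equiv.Set.prod s t)

/-- The set of integers of absolute value at most `n` and of the same parity as `n`. -/
lemma ncard_parity_ball (n : ℕ) :
    {e : ℤ | e.natAbs ≤ n ∧ ((e : ZMod 2) = ((n : ℤ) : ZMod 2))}.ncard = n + 1 := by
  have himg : {e : ℤ | e.natAbs ≤ n ∧ ((e : ZMod 2) = ((n : ℤ) : ZMod 2))} =
      (fun j : ℕ => (n : ℤ) - 2 * j) '' Set.Iic n := by
    ext e
    simp only [Set.mem_setOf_eq, Set.mem_image, Set.mem_Iic, intCast_zmod2_eq_iff]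
    constructor
    · rintro ⟨h1, h2⟩
      exact ⟨((n : ℤ) - e).toNat / 2, by omega, by omega⟩
    · rintro ⟨j, hj, rfl⟩
      constructor
      · omega
      · omega
  rw [himg, Set.ncard_image_of_injOn (by intro a _ b _ h; simp only at h; omega)]
  rw [← Finset.coe_Iic, Set.ncard_coe_finset, Nat.card_Iic]

end AuxLemmas

section PresentedAux

variable {α : Type*}

lemma presented_rel {rels : Set (FreeGroup α)} {r : FreeGroup α} (h : r ∈ rels) :
    PresentedGroup.mk rels r = 1 :=
  (QuotientGroup.eq_one_iff r).mpr (Subgroup.subset_normalClosure h)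

lemma lift_of_eq_mk (rels : Set (FreeGroup α)) :
    (FreeGroup.lift (fun c => (PresentedGroup.of c : PresentedGroup rels))) =
      PresentedGroup.mk rels :=
  FreeGroup.ext_hom _ _ (fun a => by simp [PresentedGroup.of, PresentedGroup.mk])

lemma braid_rel {X : Type} {op : X → X → X} {rels : Set (FreeGroup X)}
    (hsub : structureGroupRels op ⊆ rels) (x y : X) :
    (PresentedGroup.of x : PresentedGroup rels) * PresentedGroup.of y =
      PresentedGroup.of (op x y) * PresentedGroup.of x := by
  have h := presented_rel (hsub (⟨x, y, rfl⟩ : _ ∈ structureGroupRels op))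
  rw [map_mul, map_mul, map_inv, map_mul] at h
  exact mul_inv_eq_one.mp h

lemma hom_map_prod {A B γ : Type*} [Monoid A] [Monoid B] (F : A →* B) (u : γ → A) (v : γ → B)
    (h : ∀ c, F (u c) = v c) (L : List γ) : F ((L.map u).prod) = (L.map v).prod := by
  rw [map_list_prod, List.map_map]
  congr 1
  exact List.map_congr_left (fun c _ => h c)

lemma hom_map_prod_const {A B γ : Type*} [Monoid A] [Monoid B] (F : A →* B) (u : γ → A) (m : B)
    (h : ∀ c, F (u c) = m) (L : List γ) : F ((L.map u).prod) = m ^ L.length := by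
  rw [hom_map_prod F u (fun _ => m) h L, List.prod_eq_pow_card _ m (by simp), List.length_map]

end PresentedAux

section LengthAux

variable {G : Type} [Group G]

lemma exists_list_of_gen {C : Set G} (hinv : ∀ a ∈ C, a * a = 1)
    (hgen : Subgroup.closure C = ⊤) (g : G) :
    ∃ L : List G, (∀ x ∈ L, x ∈ C) ∧ L.prod = g := by
  have hg : g ∈ Submonoid.closure (C ∪ C⁻¹) := by
    rw [← Subgroup.closure_toSubmonoid, hgen]; trivial
  obtain ⟨L, hL, rfl⟩ := Submonoid.exists_list_of_mem_closure hg
  refine ⟨L, fun x hx => ?_, rfl⟩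
  rcases hL x hx with h | h
  · exact h
  · have hx' : x⁻¹ ∈ C := Set.mem_inv.mp h
    have : x⁻¹⁻¹ = x⁻¹ := inv_eq_of_mul_eq_one_right (hinv _ hx')
    rw [inv_inv] at this
    rw [this]; exact hx'

lemma lengthWrt_exists {C : Set G} (hinv : ∀ a ∈ C, a * a = 1)
    (hgen : Subgroup.closure C = ⊤) (g : G) :
    ∃ L : List G, L.length = lengthWrt C g ∧ (∀ x ∈ L, x ∈ C) ∧ L.prod = g := by
  have hne : {n | ∃ L : List G, L.length = n ∧ (∀ x ∈ L, x ∈ C) ∧ L.prod = g}.Nonempty := by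
    obtain ⟨L, h1, h2⟩ := exists_list_of_gen hinv hgen g
    exact ⟨L.length, L, rfl, h1, h2⟩
  exact Nat.sInf_mem hne

lemma lengthWrt_le {C : Set G} (L : List G) (h : ∀ x ∈ L, x ∈ C) :
    lengthWrt C L.prod ≤ L.length := Nat.sInf_le ⟨L, rfl, h, rfl⟩

variable {H : Type} [Group H]

lemma wordLength_le (S : Set H) (L : List H) (h : ∀ x ∈ L, x ∈ S ∨ x⁻¹ ∈ S) :
    wordLength S L.prod ≤ L.length := Nat.sInf_le ⟨L, rfl, h, rfl⟩

lemma wordLength_exists {S : Set H} (hgen : Subgroup.closure S = ⊤) (x : H) :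
    ∃ L : List H, L.length = wordLength S x ∧ (∀ y ∈ L, y ∈ S ∨ y⁻¹ ∈ S) ∧ L.prod = x := by
  have hx : x ∈ Submonoid.closure (S ∪ S⁻¹) := by
    rw [← Subgroup.closure_toSubmonoid, hgen]; trivial
  obtain ⟨L, hL, hprod⟩ := Submonoid.exists_list_of_mem_closure hx
  have hne : {n | ∃ L : List H, L.length = n ∧ (∀ y ∈ L, y ∈ S ∨ y⁻¹ ∈ S) ∧ L.prod = x}.Nonempty := by
    refine ⟨L.length, L, rfl, fun y hy => ?_, hprod⟩
    rcases hL y hy with h | h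
    · exact Or.inl h
    · exact Or.inr (Set.mem_inv.mp h)
  exact Nat.sInf_mem hne

end LengthAux


lemma abs_toAdd_prod_le {H : Type*} [Group H] (φ : H →* Multiplicative ℤ) :
    ∀ L : List H, (∀ y ∈ L, (Multiplicative.toAdd (φ y)).natAbs ≤ 1) →
      (Multiplicative.toAdd (φ L.prod)).natAbs ≤ L.length := by
  intro L
  induction L with
  | nil => intro _; simp
  | cons a t ih =>
    intro h
    rw [List.prod_cons, map_mul, toAdd_mul]
    calc (Multiplicative.toAdd (φ a) + Multiplicative.toAdd (φ t.prod)).natAbs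
        ≤ (Multiplicative.toAdd (φ a)).natAbs +
            (Multiplicative.toAdd (φ t.prod)).natAbs := Int.natAbs_add_le _ _
      _ ≤ 1 + t.length := Nat.add_le_add (h a (by simp)) (ih fun y hy => h y (by simp [hy]))
      _ = (a :: t).length := by simp [Nat.add_comm]
/-- Let `C` be a finite conjugacy class of involutions generating `G`, such that the canonical
map from the group presented with generators `e_a (a ∈ C)` and relations
`e_a e_b e_a⁻¹ = e_{aba⁻¹}` together with one power relation `e_{a₀}² = 1`, to `G`, is an
isomorphism (a `C̄`-presentation of class 2).  Then
`(1 - t²)·𝒢_{As(C)}(t) = (1 + t²)·𝒢_{G,C}(t) + t·(1 - t²)·(d/dt 𝒢_{G,C})(t)` in `ℤ⟦t⟧`. -/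
theorem growthSeries_structureGroup_of_classTwoPresentation
    {G : Type} [Group G] (C : Set G) (hfin : C.Finite)
    (hinv : ∀ a ∈ C, a * a = 1)
    (hconj : ∀ a ∈ C, ∀ b ∈ C, IsConj a b)
    (hclosed : ∀ a ∈ C, ∀ g : G, g * a * g⁻¹ ∈ C)
    (hgen : Subgroup.closure C = ⊤)
    (a₀ : C)
    (op : C → C → C) (hop : ∀ a b : C, (op a b : G) = (a : G) * b * (a : G)⁻¹)
    (f : PresentedGroup
        (structureGroupRels op ∪ {FreeGroup.of a₀ ^ 2}) →* G)
    (hf : ∀ c : C, f (PresentedGroup.of c) = (c : G))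
    (hbij : Function.Bijective f) :
    (1 - PowerSeries.X ^ 2) *
        growthSeries (Set.range (PresentedGroup.of (rels := structureGroupRels op))) =
      (1 + PowerSeries.X ^ 2) * growthSeriesWrt C +
        PowerSeries.X * (1 - PowerSeries.X ^ 2) *
          PowerSeries.derivativeFun (growthSeriesWrt C) := by
  classical
  have cinv : ∀ c : C, (c : G)⁻¹ = (c : G) := fun c => inv_eq_of_mul_eq_one_right (hinv c c.2)
  have csq : ∀ c : C, (c : G) * c = 1 := fun c => hinv c c.2
  have hop2 : ∀ a b : C, op a (op a b) = b := by
    intro a b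
    apply Subtype.ext
    rw [hop, hop]
    calc (a:G) * ((a:G) * b * (a:G)⁻¹) * (a:G)⁻¹
        = ((a:G)*a) * b * ((a:G)*a)⁻¹ := by group
      _ = (b : G) := by rw [csq a]; simp
  have braid : ∀ a b : C,
      (PresentedGroup.of a : PresentedGroup (structureGroupRels op)) * PresentedGroup.of b =
        PresentedGroup.of (op a b) * PresentedGroup.of a := braid_rel subset_rfl
  -- the homomorphism q to the class-2 quotient, and π to G
  have hq : ∀ r ∈ structureGroupRels op,
      FreeGroup.lift (fun c : C => (PresentedGroup.of c :
        PresentedGroup (structureGroupRels op ∪ {FreeGroup.of a₀ ^ 2}))) r = 1 := by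
    intro r hr
    rw [lift_of_eq_mk]
    exact presented_rel (Set.mem_union_left _ hr)
  set q : PresentedGroup (structureGroupRels op) →*
      PresentedGroup (structureGroupRels op ∪ {FreeGroup.of a₀ ^ 2}) :=
    PresentedGroup.toGroup hq with hqdef
  have hqof : ∀ c : C, q (PresentedGroup.of c) = PresentedGroup.of c :=
    fun c => PresentedGroup.toGroup.of hq
  set π : PresentedGroup (structureGroupRels op) →* G := f.comp q with hπdef
  have hπof : ∀ c : C, π (PresentedGroup.of c) = (c : G) := by
    intro c; rw [hπdef, MonoidHom.comp_apply, hqof, hf]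
  -- the degree homomorphism φ
  have hφr : ∀ r ∈ structureGroupRels op,
      FreeGroup.lift (fun _ : C => (Multiplicative.ofAdd (1:ℤ))) r = 1 := by
    rintro r ⟨x, y, rfl⟩
    simp only [map_mul, map_inv, FreeGroup.lift_apply_of]
    group
  set φ : PresentedGroup (structureGroupRels op) →* Multiplicative ℤ :=
    PresentedGroup.toGroup hφr with hφdef
  have hφof : ∀ c : C, φ (PresentedGroup.of c) = Multiplicative.ofAdd (1:ℤ) :=
    fun c => PresentedGroup.toGroup.of hφr
  -- the parity homomorphism δ on G
  have hδr : ∀ r ∈ structureGroupRels op ∪ {FreeGroup.of a₀ ^ 2},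
      FreeGroup.lift (fun _ : C => (Multiplicative.ofAdd (1:ZMod 2))) r = 1 := by
    rintro r (⟨x, y, rfl⟩ | hr)
    · simp only [map_mul, map_inv, FreeGroup.lift_apply_of]
      group
    · simp only [Set.mem_singleton_iff] at hr
      subst hr
      rw [map_pow]
      simp only [FreeGroup.lift_apply_of]
      decide
  set δ : G →* Multiplicative (ZMod 2) :=
    (PresentedGroup.toGroup hδr).comp (MulEquiv.ofBijective f hbij).symm.toMonoidHom with hδdef
  have hδc : ∀ c : C, δ (c : G) = Multiplicative.ofAdd (1 : ZMod 2) := by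
    intro c
    have h1 : (MulEquiv.ofBijective f hbij).symm (c : G) = PresentedGroup.of c := by
      rw [MulEquiv.symm_apply_eq]
      exact (hf c).symm
    rw [hδdef, MonoidHom.comp_apply, MulEquiv.coe_toMonoidHom, h1]
    exact PresentedGroup.toGroup.of hδr
  -- centrality of squares
  set z : PresentedGroup (structureGroupRels op) := PresentedGroup.of a₀ ^ 2 with hz
  have sqcomm : ∀ a b : C, (PresentedGroup.of a : PresentedGroup (structureGroupRels op)) ^ 2 *
      PresentedGroup.of b = PresentedGroup.of b * PresentedGroup.of a ^ 2 := by
    intro a b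
    rw [pow_two, mul_assoc, braid a b, ← mul_assoc, braid a (op a b), hop2, mul_assoc, ← pow_two]
  have hcent : ∀ a : C, ∀ x : PresentedGroup (structureGroupRels op),
      PresentedGroup.of a ^ 2 * x = x * PresentedGroup.of a ^ 2 := by
    intro a x
    have hx : x ∈ Subgroup.centralizer {(PresentedGroup.of a :
        PresentedGroup (structureGroupRels op)) ^ 2} := by
      apply PresentedGroup.generated_by
      intro b
      rw [Subgroup.mem_centralizer_iff]
      rintro g hg
      rw [Set.mem_singleton_iff] at hg
      subst hg
      exact sqcomm a b
    exact Subgroup.mem_centralizer_iff.mp hx _ rfl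
  have conj_act : ∀ g : G, ∃ W : PresentedGroup (structureGroupRels op),
      ∀ b : C, W * PresentedGroup.of b * W⁻¹ =
        PresentedGroup.of ⟨g * b * g⁻¹, hclosed b b.2 g⟩ := by
    intro g
    have hg : g ∈ Subgroup.closure C := by rw [hgen]; trivial
    induction hg using Subgroup.closure_induction with
    | mem c hc =>
      refine ⟨PresentedGroup.of ⟨c, hc⟩, fun b => ?_⟩
      have hopc : op ⟨c, hc⟩ b = ⟨c * b * c⁻¹, hclosed b b.2 c⟩ := Subtype.ext (hop _ _)
      rw [braid ⟨c, hc⟩ b, mul_inv_cancel_right, hopc]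
    | one =>
      refine ⟨1, fun b => ?_⟩
      have : (⟨(1:G) * b * 1⁻¹, hclosed b b.2 1⟩ : C) = b := Subtype.ext (by group)
      rw [this]; group
    | mul g h hg hh ihg ihh =>
      obtain ⟨Wg, hWg⟩ := ihg
      obtain ⟨Wh, hWh⟩ := ihh
      refine ⟨Wg * Wh, fun b => ?_⟩
      have h1 : Wg * Wh * PresentedGroup.of b * (Wg * Wh)⁻¹ =
          Wg * (Wh * PresentedGroup.of b * Wh⁻¹) * Wg⁻¹ := by group
      rw [h1, hWh b, hWg ⟨h * b * h⁻¹, hclosed b b.2 h⟩]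
      congr 1
      exact Subtype.ext (by show g * (h * b * h⁻¹) * g⁻¹ = (g * h) * b * (g * h)⁻¹; group)
    | inv g hg ih =>
      obtain ⟨W, hW⟩ := ih
      refine ⟨W⁻¹, fun b => ?_⟩
      have hb' := hW ⟨g⁻¹ * b * g⁻¹⁻¹, hclosed b b.2 g⁻¹⟩
      have heq : (⟨g * (g⁻¹ * b * g⁻¹⁻¹) * g⁻¹,
          hclosed _ (hclosed b b.2 g⁻¹) g⟩ : C) = b := Subtype.ext (by show _ = (b : G); group)
      rw [heq] at hb'
      rw [← hb']
      group
  have sq_eq : ∀ a : C, (PresentedGroup.of a : PresentedGroup (structureGroupRels op)) ^ 2 = z := by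
    intro a
    obtain ⟨g, hg⟩ := isConj_iff.mp (hconj a₀ a₀.2 a a.2)
    obtain ⟨W, hW⟩ := conj_act g
    have h1 : (PresentedGroup.of a : PresentedGroup (structureGroupRels op)) =
        W * PresentedGroup.of a₀ * W⁻¹ := by
      rw [hW a₀]
      congr 1
      exact Subtype.ext hg.symm
    have h2 : (W * PresentedGroup.of a₀ * W⁻¹) ^ 2 = W * z * W⁻¹ := by
      rw [hz, pow_two, pow_two]; group
    rw [h1, h2, ← hcent a₀ W, mul_inv_cancel_right]
  -- the kernel of π consists of powers of z
  haveI hnorm : (Subgroup.zpowers z).Normal := by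
    constructor
    intro n hn g
    obtain ⟨k, rfl⟩ := Subgroup.mem_zpowers_iff.mp hn
    have hcom : Commute z g := hcent a₀ g
    rw [← (hcom.zpow_left k).eq, mul_inv_cancel_right]
    exact Subgroup.zpow_mem _ (Subgroup.mem_zpowers z) k
  have hcomp : ∀ x' : FreeGroup C, q (PresentedGroup.mk _ x') = PresentedGroup.mk _ x' := by
    intro x'
    have h : q.comp (PresentedGroup.mk (structureGroupRels op)) =
        PresentedGroup.mk (structureGroupRels op ∪ {FreeGroup.of a₀ ^ 2}) :=
      FreeGroup.ext_hom _ _ (fun c => hqof c)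
    exact DFunLike.congr_fun h x'
  have hker : ∀ x, π x = 1 → ∃ k : ℤ, x = z ^ k := by
    intro x hx
    obtain ⟨x', rfl⟩ := QuotientGroup.mk'_surjective
      (Subgroup.normalClosure (structureGroupRels op)) x
    have hqx : (PresentedGroup.mk (structureGroupRels op ∪ {FreeGroup.of a₀ ^ 2}) x'
        : PresentedGroup (structureGroupRels op ∪ {FreeGroup.of a₀ ^ 2})) = 1 := by
      rw [← hcomp x']
      apply hbij.injective
      rw [map_one]
      rw [hπdef] at hx
      exact hx
    have hmem : x' ∈ Subgroup.normalClosure (structureGroupRels op ∪ {FreeGroup.of a₀ ^ 2}) :=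
      (QuotientGroup.eq_one_iff x').mp hqx
    have hx2 : PresentedGroup.mk (structureGroupRels op) x' ∈
        Subgroup.map (PresentedGroup.mk (structureGroupRels op))
          (Subgroup.normalClosure (structureGroupRels op ∪ {FreeGroup.of a₀ ^ 2})) :=
      Subgroup.mem_map_of_mem _ hmem
    rw [Subgroup.map_normalClosure (structureGroupRels op ∪ {FreeGroup.of a₀ ^ 2})
      (PresentedGroup.mk (structureGroupRels op))
      (QuotientGroup.mk'_surjective _)] at hx2
    have hle : Subgroup.normalClosure ((PresentedGroup.mk (structureGroupRels op)) ''
        (structureGroupRels op ∪ {FreeGroup.of a₀ ^ 2})) ≤ Subgroup.zpowers z := by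
      apply Subgroup.normalClosure_le_normal
      rintro y ⟨r, hr | hr, rfl⟩
      · rw [presented_rel hr]
        exact Subgroup.one_mem _
      · simp only [Set.mem_singleton_iff] at hr
        subst hr
        have : PresentedGroup.mk (structureGroupRels op) (FreeGroup.of a₀ ^ 2) = z := by
          rw [map_pow, hz]; rfl
        rw [this]
        exact Subgroup.mem_zpowers z
    obtain ⟨k, hk⟩ := Subgroup.mem_zpowers_iff.mp (hle hx2)
    exact ⟨k, hk.symm⟩
  have hφz : φ z = Multiplicative.ofAdd (2:ℤ) := by
    rw [hz, map_pow, hφof, pow_two, ← ofAdd_add]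
    norm_num
  have hinj : ∀ x y, π x = π y → φ x = φ y → x = y := by
    intro x y h1 h2
    have h3 : π (x * y⁻¹) = 1 := by rw [map_mul, map_inv, h1]; simp
    obtain ⟨k, hk⟩ := hker _ h3
    have h4 : φ (x * y⁻¹) = 1 := by rw [map_mul, map_inv, h2]; simp
    rw [hk, map_zpow, hφz] at h4
    have h5 : k * 2 = 0 := by
      have := congrArg Multiplicative.toAdd h4
      simpa [smul_eq_mul] using this
    have hk0 : k = 0 := by omega
    rw [hk0, zpow_zero] at hk
    rw [← mul_inv_eq_one, hk]
  -- parity compatibility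
  set ρ : Multiplicative ℤ →* Multiplicative (ZMod 2) :=
    AddMonoidHom.toMultiplicative (Int.castAddHom (ZMod 2)) with hρdef
  have hρofAdd : ∀ n : ℤ, ρ (Multiplicative.ofAdd n) = Multiplicative.ofAdd ((n : ZMod 2)) :=
    fun n => rfl
  have hδπφ : ∀ x, δ (π x) = ρ (φ x) := by
    intro x
    have h : δ.comp π = ρ.comp φ := by
      apply PresentedGroup.ext
      intro c
      simp only [MonoidHom.comp_apply, hπof, hδc, hφof, hρofAdd]
      norm_num
    exact DFunLike.congr_fun h x
  -- computing π and φ on products of generators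
  have hπlist : ∀ L : List C,
      π ((L.map (fun c => PresentedGroup.of c)).prod) = (L.map (fun c : C => (c:G))).prod :=
    hom_map_prod π _ _ hπof
  have hπlistinv : ∀ L : List C,
      π ((L.map (fun c => (PresentedGroup.of c)⁻¹)).prod) = (L.map (fun c : C => (c:G))).prod :=
    hom_map_prod π _ _ (fun c => by rw [map_inv, hπof, cinv])
  have hφlist : ∀ L : List C,
      φ ((L.map (fun c => PresentedGroup.of c)).prod) = Multiplicative.ofAdd (L.length : ℤ) := by
    intro L
    rw [hom_map_prod_const φ _ (Multiplicative.ofAdd (1:ℤ)) hφof L, ← ofAdd_nsmul]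
    congr 1
    simp
  have hφlistinv : ∀ L : List C,
      φ ((L.map (fun c => (PresentedGroup.of c)⁻¹)).prod) =
        Multiplicative.ofAdd (-(L.length : ℤ)) := by
    intro L
    rw [hom_map_prod_const φ _ (Multiplicative.ofAdd (-1:ℤ))
      (fun c => by rw [map_inv, hφof]; rfl) L, ← ofAdd_nsmul]
    congr 1
    simp
  have hδlist : ∀ L : List G, (∀ x ∈ L, x ∈ C) →
      δ L.prod = Multiplicative.ofAdd ((L.length : ZMod 2)) := by
    intro L hL
    rw [map_list_prod, List.prod_eq_pow_card (L.map δ) (Multiplicative.ofAdd (1 : ZMod 2)) ?_,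
      List.length_map, ← ofAdd_nsmul]
    · congr 1
      simp
    · intro x hx
      obtain ⟨y, hy, rfl⟩ := List.mem_map.mp hx
      exact hδc ⟨y, hL y hy⟩
  have hδlen : ∀ g : G, δ g = Multiplicative.ofAdd ((lengthWrt C g : ZMod 2)) := by
    intro g
    obtain ⟨L, hlen, hmem, hprod⟩ := lengthWrt_exists hinv hgen g
    calc δ g = δ L.prod := by rw [hprod]
      _ = Multiplicative.ofAdd ((L.length : ZMod 2)) := hδlist L hmem
      _ = Multiplicative.ofAdd ((lengthWrt C g : ZMod 2)) := by rw [hlen]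
  have ha₀sq : (a₀ : G) ^ 2 = 1 := by rw [pow_two]; exact csq a₀
  have ha₀even : ∀ k : ℕ, k % 2 = 0 → (a₀ : G) ^ k = 1 := by
    intro k hk
    obtain ⟨t, rfl⟩ : ∃ t, k = 2 * t := ⟨k / 2, by omega⟩
    rw [pow_mul, ha₀sq, one_pow]
  -- building words of prescribed image and degree
  have build : ∀ (g : G) (e : ℤ), ((e : ZMod 2) = ((lengthWrt C g : ℤ) : ZMod 2)) →
      ∃ x : PresentedGroup (structureGroupRels op), π x = g ∧
        Multiplicative.toAdd (φ x) = e ∧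
        wordLength (Set.range (PresentedGroup.of (rels := structureGroupRels op))) x ≤
          max e.natAbs (lengthWrt C g) := by
    intro g e hpar
    obtain ⟨L, hlen, hmem, hprod⟩ := lengthWrt_exists hinv hgen g
    rw [intCast_zmod2_eq_iff] at hpar
    set LC : List C := L.attach.map (fun p => (⟨p.1, hmem p.1 p.2⟩ : C)) with hLC
    have hLCmap : LC.map (fun c : C => (c : G)) = L := by
      simp [hLC, List.map_map]
    have hLClen : LC.length = lengthWrt C g := by
      rw [← hlen, hLC, List.length_map, List.length_attach]
    by_cases hcase : e.natAbs ≤ lengthWrt C g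
    · set j : ℕ := ((lengthWrt C g : ℤ) - e).toNat / 2 with hj
      have hj2 : (j : ℤ) * 2 = (lengthWrt C g : ℤ) - e := by omega
      have hjle : j ≤ lengthWrt C g := by omega
      refine ⟨(((LC.take j).map (fun c => (PresentedGroup.of c)⁻¹)) ++
        ((LC.drop j).map (fun c => PresentedGroup.of c))).prod, ?_, ?_, ?_⟩
      · rw [List.prod_append, map_mul, hπlistinv, hπlist, ← List.prod_append,
          ← List.map_append, List.take_append_drop, hLCmap, hprod]
      · rw [List.prod_append, map_mul, toAdd_mul, hφlistinv, hφlist, toAdd_ofAdd, toAdd_ofAdd,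
          List.length_take, List.length_drop, hLClen]
        omega
      · refine le_trans (wordLength_le _ _ ?_) ?_
        · intro x hx
          rcases List.mem_append.mp hx with h | h
          · obtain ⟨c, _, rfl⟩ := List.mem_map.mp h
            exact Or.inr (by rw [inv_inv]; exact ⟨c, rfl⟩)
          · obtain ⟨c, _, rfl⟩ := List.mem_map.mp h
            exact Or.inl ⟨c, rfl⟩
        · simp only [List.length_append, List.length_map, List.length_take, List.length_drop,
            hLClen]
          omega
    · by_cases hpos : 0 ≤ e
      · set k : ℕ := (e - (lengthWrt C g : ℤ)).toNat with hk
        have hk2 : (k : ℤ) = e - (lengthWrt C g : ℤ) := by omega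
        have hkeven : k % 2 = 0 := by omega
        refine ⟨((LC.map (fun c => PresentedGroup.of c)) ++
          List.replicate k (PresentedGroup.of a₀)).prod, ?_, ?_, ?_⟩
        · rw [List.prod_append, map_mul, hπlist, hLCmap, hprod, List.prod_replicate, map_pow,
            hπof, ha₀even k hkeven, mul_one]
        · rw [List.prod_append, map_mul, toAdd_mul, hφlist, List.prod_replicate, map_pow, hφof,
            toAdd_ofAdd, toAdd_pow, toAdd_ofAdd, hLClen]
          simp only [nsmul_eq_mul, mul_one]
          omega
        · refine le_trans (wordLength_le _ _ ?_) ?_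
          · intro x hx
            rcases List.mem_append.mp hx with h | h
            · obtain ⟨c, _, rfl⟩ := List.mem_map.mp h
              exact Or.inl ⟨c, rfl⟩
            · rw [List.eq_of_mem_replicate h]
              exact Or.inl ⟨a₀, rfl⟩
          · simp only [List.length_append, List.length_map, List.length_replicate, hLClen]
            omega
      · set k : ℕ := (-e - (lengthWrt C g : ℤ)).toNat with hk
        have hk2 : (k : ℤ) = -e - (lengthWrt C g : ℤ) := by omega
        have hkeven : k % 2 = 0 := by omega
        refine ⟨((LC.map (fun c => (PresentedGroup.of c)⁻¹)) ++
          List.replicate k (PresentedGroup.of a₀)⁻¹).prod, ?_, ?_, ?_⟩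
        · rw [List.prod_append, map_mul, hπlistinv, hLCmap, hprod, List.prod_replicate,
            inv_pow, map_inv, map_pow, hπof, ha₀even k hkeven, inv_one, mul_one]
        · rw [List.prod_append, map_mul, toAdd_mul, hφlistinv, List.prod_replicate, inv_pow,
            map_inv, map_pow, hφof, toAdd_inv, toAdd_ofAdd, toAdd_pow, toAdd_ofAdd, hLClen]
          simp only [nsmul_eq_mul, mul_one]
          omega
        · refine le_trans (wordLength_le _ _ ?_) ?_
          · intro x hx
            rcases List.mem_append.mp hx with h | h
            · obtain ⟨c, _, rfl⟩ := List.mem_map.mp h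
              exact Or.inr (by rw [inv_inv]; exact ⟨c, rfl⟩)
            · rw [List.eq_of_mem_replicate h]
              exact Or.inr (by rw [inv_inv]; exact ⟨a₀, rfl⟩)
          · simp only [List.length_append, List.length_map, List.length_replicate, hLClen]
            omega
  -- the word length formula on the structure group
  have hSgen : Subgroup.closure (Set.range (PresentedGroup.of (rels := structureGroupRels op))) =
      ⊤ := PresentedGroup.closure_range_of _
  have lb : ∀ x : PresentedGroup (structureGroupRels op),
      max (Multiplicative.toAdd (φ x)).natAbs (lengthWrt C (π x)) ≤
        wordLength (Set.range (PresentedGroup.of (rels := structureGroupRels op))) x := by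
    intro x
    obtain ⟨L, hlen, hmem, hprod⟩ := wordLength_exists hSgen x
    rw [← hlen]
    refine max_le ?_ ?_
    · rw [← hprod]
      apply abs_toAdd_prod_le φ L
      intro y hy
      rcases hmem y hy with ⟨c, rfl⟩ | ⟨c, hc⟩
      · rw [hφof]
        simp
      · have hyc : y = (PresentedGroup.of c)⁻¹ := by rw [hc, inv_inv]
        rw [hyc, map_inv, hφof, toAdd_inv, toAdd_ofAdd]
        simp
    · have hmemC : ∀ y ∈ L.map π, y ∈ C := by
        intro y hy
        obtain ⟨w, hw, rfl⟩ := List.mem_map.mp hy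
        rcases hmem w hw with ⟨c, rfl⟩ | ⟨c, hc⟩
        · rw [hπof]; exact c.2
        · have hw2 : w = (PresentedGroup.of c)⁻¹ := by rw [hc, inv_inv]
          rw [hw2, map_inv, hπof, cinv]; exact c.2
      have hmp : (L.map π).prod = π x := by rw [← map_list_prod, hprod]
      calc lengthWrt C (π x) = lengthWrt C (L.map π).prod := by rw [hmp]
        _ ≤ (L.map π).length := lengthWrt_le _ hmemC
        _ = L.length := List.length_map _
  have hparall : ∀ x : PresentedGroup (structureGroupRels op),
      ((Multiplicative.toAdd (φ x) : ℤ) : ZMod 2) = ((lengthWrt C (π x) : ℤ) : ZMod 2) := by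
    intro x
    have h1 := hδπφ x
    rw [hδlen (π x)] at h1
    have h2 : ρ (φ x) =
        Multiplicative.ofAdd (((Multiplicative.toAdd (φ x) : ℤ) : ZMod 2)) := by
      rw [← hρofAdd, ofAdd_toAdd]
    rw [h2] at h1
    have h3 := congrArg Multiplicative.toAdd h1
    simp only [toAdd_ofAdd] at h3
    rw [Int.cast_natCast]
    exact h3.symm
  have wl_eq : ∀ x : PresentedGroup (structureGroupRels op),
      wordLength (Set.range (PresentedGroup.of (rels := structureGroupRels op))) x =
        max (Multiplicative.toAdd (φ x)).natAbs (lengthWrt C (π x)) := by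
    intro x
    refine le_antisymm ?_ (lb x)
    obtain ⟨x', hπx', hφx', hwl⟩ := build (π x) (Multiplicative.toAdd (φ x)) (hparall x)
    have hx' : x' = x :=
      hinj x' x (by rw [hπx']) (by rw [← ofAdd_toAdd (φ x'), hφx', ofAdd_toAdd])
    rwa [hx'] at hwl
  -- finiteness of spheres
  have hGfin : ∀ n : ℕ, {g : G | lengthWrt C g = n}.Finite := by
    intro n
    apply Set.Finite.subset ((finite_lists hfin n).image List.prod)
    intro g hg
    obtain ⟨L, hlen, hmem, hprod⟩ := lengthWrt_exists hinv hgen g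
    exact ⟨L, ⟨by rw [hlen, hg], hmem⟩, hprod⟩
  have hGfinle : ∀ n : ℕ, {g : G | lengthWrt C g ≤ n}.Finite := by
    intro n
    have hsub : {g : G | lengthWrt C g ≤ n} ⊆ ⋃ m : Fin (n+1), {g : G | lengthWrt C g = m} := by
      intro g hg
      simp only [Set.mem_setOf_eq] at hg
      exact Set.mem_iUnion.mpr ⟨⟨lengthWrt C g, by omega⟩, rfl⟩
    exact Set.Finite.subset (Set.finite_iUnion (fun m : Fin (n+1) => hGfin m)) hsub
  set Ψ : PresentedGroup (structureGroupRels op) → G × ℤ :=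
    fun x => (π x, Multiplicative.toAdd (φ x)) with hΨ
  have hΨinj : Function.Injective Ψ := by
    intro x y hxy
    rw [hΨ] at hxy
    simp only [Prod.mk.injEq] at hxy
    exact hinj x y hxy.1 (by rw [← ofAdd_toAdd (φ x), hxy.2, ofAdd_toAdd])
  have hAfin : ∀ n : ℕ,
      {x : PresentedGroup (structureGroupRels op) |
        wordLength (Set.range (PresentedGroup.of (rels := structureGroupRels op))) x = n}.Finite := by
    intro n
    apply Set.Finite.subset (Set.Finite.preimage (hΨinj.injOn)
      ((hGfinle n).prod (Set.finite_Icc (-(n:ℤ)) (n:ℤ))))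
    intro x hx
    rw [Set.mem_setOf_eq, wl_eq x] at hx
    refine Set.mem_preimage.mpr (Set.mem_prod.mpr ⟨?_, ?_⟩)
    · show lengthWrt C (π x) ≤ n
      omega
    · show Multiplicative.toAdd (φ x) ∈ Set.Icc (-(n:ℤ)) (n:ℤ)
      rw [Set.mem_Icc]
      constructor <;> omega
  -- the image of the sphere of radius n
  have himage : ∀ n : ℕ,
      Ψ '' {x | wordLength (Set.range (PresentedGroup.of (rels := structureGroupRels op))) x = n} =
      {p : G × ℤ | ((p.2 : ZMod 2) = ((lengthWrt C p.1 : ℤ) : ZMod 2)) ∧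
        max p.2.natAbs (lengthWrt C p.1) = n} := by
    intro n
    ext p
    constructor
    · rintro ⟨x, hx, rfl⟩
      exact ⟨hparall x, by rw [← wl_eq x]; exact hx⟩
    · rintro ⟨hp1, hp2⟩
      obtain ⟨x, hπx, hφx, _⟩ := build p.1 p.2 hp1
      refine ⟨x, ?_, ?_⟩
      · rw [Set.mem_setOf_eq, wl_eq x, hπx, hφx, hp2]
      · rw [hΨ]
        simp only [hπx, hφx]
  -- counting
  obtain ⟨cN, hcN⟩ : ∃ cN : ℕ → ℕ, ∀ n, {g : G | lengthWrt C g = n}.ncard = cN n :=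
    ⟨_, fun n => rfl⟩
  obtain ⟨uN, huN⟩ : ∃ uN : ℕ → ℕ, ∀ n, {g : G | lengthWrt C g < n ∧
      (((lengthWrt C g : ℤ) : ZMod 2) = ((n:ℤ) : ZMod 2))}.ncard = uN n := ⟨_, fun n => rfl⟩
  obtain ⟨aN, haN⟩ : ∃ aN : ℕ → ℕ, ∀ n,
      {x : PresentedGroup (structureGroupRels op) |
        wordLength (Set.range (PresentedGroup.of (rels := structureGroupRels op))) x = n}.ncard =
      aN n := ⟨_, fun n => rfl⟩
  have hufin : ∀ n : ℕ, {g : G | lengthWrt C g < n ∧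
      (((lengthWrt C g : ℤ) : ZMod 2) = ((n:ℤ) : ZMod 2))}.Finite := by
    intro n
    apply Set.Finite.subset (hGfinle n)
    intro g hg
    exact le_of_lt hg.1
  have hT : ∀ n : ℕ,
      {p : G × ℤ | ((p.2 : ZMod 2) = ((lengthWrt C p.1 : ℤ) : ZMod 2)) ∧
        max p.2.natAbs (lengthWrt C p.1) = n} =
      ({g : G | lengthWrt C g = n} ×ˢ
        {e : ℤ | e.natAbs ≤ n ∧ ((e : ZMod 2) = ((n:ℤ) : ZMod 2))}) ∪
      ({g : G | lengthWrt C g < n ∧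
        (((lengthWrt C g : ℤ) : ZMod 2) = ((n:ℤ) : ZMod 2))} ×ˢ
        ({(n:ℤ), -(n:ℤ)} : Set ℤ)) := by
    intro n
    ext ⟨g, e⟩
    simp only [Set.mem_setOf_eq, Set.mem_union, Set.mem_prod, Set.mem_insert_iff,
      Set.mem_singleton_iff, intCast_zmod2_eq_iff]
    omega
  have hcount : ∀ n : ℕ, aN n = cN n * (n + 1) +
      uN n * ({(n:ℤ), -(n:ℤ)} : Set ℤ).ncard := by
    intro n
    have hEfin : {e : ℤ | e.natAbs ≤ n ∧ ((e : ZMod 2) = ((n:ℤ) : ZMod 2))}.Finite := by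
      apply Set.Finite.subset (Set.finite_Icc (-(n:ℤ)) (n:ℤ))
      intro e he
      rw [Set.mem_Icc]
      have := he.1
      omega
    have hdisj : Disjoint
        ({g : G | lengthWrt C g = n} ×ˢ
          {e : ℤ | e.natAbs ≤ n ∧ ((e : ZMod 2) = ((n:ℤ) : ZMod 2))})
        ({g : G | lengthWrt C g < n ∧
          (((lengthWrt C g : ℤ) : ZMod 2) = ((n:ℤ) : ZMod 2))} ×ˢ
          ({(n:ℤ), -(n:ℤ)} : Set ℤ)) := by
      rw [Set.disjoint_left]
      rintro ⟨g, e⟩ h1 h2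
      have ha := (Set.mem_prod.mp h1).1
      have hb := (Set.mem_prod.mp h2).1
      simp only [Set.mem_setOf_eq] at ha hb
      omega
    rw [← haN n, ← Set.ncard_image_of_injective _ hΨinj, himage n, hT n,
      Set.ncard_union_eq hdisj ((hGfin n).prod hEfin)
        ((hufin n).prod ((Set.finite_singleton _).insert _)),
      ncard_prod', ncard_prod', ncard_parity_ball n, hcN n, huN n]
  have hpair : ∀ n : ℕ, 1 ≤ n → ({(n:ℤ), -(n:ℤ)} : Set ℤ).ncard = 2 := by
    intro n hn
    apply Set.ncard_pair
    omega
  have hu0 : uN 0 = 0 := by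
    rw [← huN 0]
    convert Set.ncard_empty G
    rw [Set.eq_empty_iff_forall_notMem]
    intro g hg
    exact absurd hg.1 (by omega)
  have hu1 : uN 1 = 0 := by
    rw [← huN 1]
    convert Set.ncard_empty G
    rw [Set.eq_empty_iff_forall_notMem]
    intro g hg
    have h1 := hg.1
    have h2 := hg.2
    rw [intCast_zmod2_eq_iff] at h2
    omega
  have hurec : ∀ n : ℕ, uN (n + 2) = uN n + cN n := by
    intro n
    have hset : {g : G | lengthWrt C g < n + 2 ∧
        (((lengthWrt C g : ℤ) : ZMod 2) = (((n:ℕ)+2 : ℤ) : ZMod 2))} =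
        {g : G | lengthWrt C g < n ∧
          (((lengthWrt C g : ℤ) : ZMod 2) = ((n:ℤ) : ZMod 2))} ∪
        {g : G | lengthWrt C g = n} := by
      ext g
      simp only [Set.mem_setOf_eq, Set.mem_union, intCast_zmod2_eq_iff]
      omega
    have hdisj : Disjoint
        {g : G | lengthWrt C g < n ∧
          (((lengthWrt C g : ℤ) : ZMod 2) = ((n:ℤ) : ZMod 2))}
        {g : G | lengthWrt C g = n} := by
      rw [Set.disjoint_left]
      intro g h1 h2
      simp only [Set.mem_setOf_eq] at h1 h2
      omega
    rw [← huN (n+2), ← huN n, ← hcN n]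
    have : ((((n:ℕ) + 2 : ℕ) : ℤ) : ZMod 2) = (((n:ℕ)+2 : ℤ) : ZMod 2) := by push_cast; ring_nf
    rw [show (((n+2 : ℕ) : ℤ) : ZMod 2) = (((n:ℕ)+2 : ℤ) : ZMod 2) by push_cast; ring_nf]
    rw [hset, Set.ncard_union_eq hdisj (hufin n) (hGfin n)]
  -- coefficients of the three series
  have hcoeffA : ∀ n : ℕ, (PowerSeries.coeff n)
      (growthSeries (Set.range (PresentedGroup.of (rels := structureGroupRels op)))) =
      (aN n : ℤ) := by
    intro n
    rw [growthSeries, PowerSeries.coeff_mk, haN n]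
  have hcoeffC : ∀ n : ℕ, (PowerSeries.coeff n) (growthSeriesWrt C) = (cN n : ℤ) := by
    intro n
    rw [growthSeriesWrt, PowerSeries.coeff_mk, hcN n]
  have hcoeffD : ∀ n : ℕ, (PowerSeries.coeff n)
      (PowerSeries.derivativeFun (growthSeriesWrt C)) = (cN (n+1) : ℤ) * (n+1) := by
    intro n
    show (PowerSeries.coeff n) (PowerSeries.derivative ℤ (growthSeriesWrt C)) = _
    rw [PowerSeries.coeff_derivativeFun, hcoeffC]
  have hcount2 : ∀ m : ℕ, (aN m : ℤ) = cN m * (m+1) + uN m * 2 := by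
    intro m
    rcases m with _ | m
    · rw [hcount 0, hu0]
      push_cast
      ring
    · rw [hcount (m+1), hpair (m+1) (by omega)]
      push_cast
      ring
  have hX2 : ∀ (F : PowerSeries ℤ) (m : ℕ),
      (PowerSeries.coeff (m+2)) (PowerSeries.X^2 * F) = PowerSeries.coeff m F := by
    intro F m
    rw [PowerSeries.coeff_X_pow_mul', if_pos (by omega)]
    norm_num
  have hX2z : ∀ (F : PowerSeries ℤ), (PowerSeries.coeff 0) (PowerSeries.X^2 * F) = 0 := by
    intro F
    rw [PowerSeries.coeff_X_pow_mul', if_neg (by omega)]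
  have hX2o : ∀ (F : PowerSeries ℤ), (PowerSeries.coeff 1) (PowerSeries.X^2 * F) = 0 := by
    intro F
    rw [PowerSeries.coeff_X_pow_mul', if_neg (by omega)]
  have hXD : ∀ m : ℕ, (PowerSeries.coeff m)
      (PowerSeries.X^1 * PowerSeries.derivativeFun (growthSeriesWrt C)) = (cN m : ℤ) * m := by
    intro m
    rcases m with _ | m
    · rw [PowerSeries.coeff_X_pow_mul', if_neg (by omega)]
      simp
    · rw [PowerSeries.coeff_X_pow_mul', if_pos (by omega)]
      norm_num [hcoeffD m]
      try push_cast
      try ring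
  -- final computation
  have e1 : (1 - PowerSeries.X ^ 2) *
      growthSeries (Set.range (PresentedGroup.of (rels := structureGroupRels op))) =
      growthSeries (Set.range (PresentedGroup.of (rels := structureGroupRels op))) -
        PowerSeries.X^2 *
          growthSeries (Set.range (PresentedGroup.of (rels := structureGroupRels op))) := by
    ring
  have e2 : (1 + PowerSeries.X ^ 2) * growthSeriesWrt C =
      growthSeriesWrt C + PowerSeries.X^2 * growthSeriesWrt C := by ring
  have e3 : PowerSeries.X * (1 - PowerSeries.X ^ 2) *
      PowerSeries.derivativeFun (growthSeriesWrt C) =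
      PowerSeries.X^1 * PowerSeries.derivativeFun (growthSeriesWrt C) -
        PowerSeries.X^2 * (PowerSeries.X^1 * PowerSeries.derivativeFun (growthSeriesWrt C)) := by
    ring
  rw [e1, e2, e3]
  refine PowerSeries.ext fun n => ?_
  rw [map_sub, map_add, map_add, map_sub]
  rcases n with _ | n
  · rw [hcoeffA, hcoeffC, hX2z, hX2z, hX2z, hXD]
    have h0 := hcount2 0
    have h1 := hu0
    push_cast at h0 ⊢
    omega
  · rcases n with _ | m
    · rw [hcoeffA, hcoeffC, hX2o, hX2o, hX2o, hXD]
      have h0 := hcount2 1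
      have h1 := hu1
      push_cast at h0 ⊢
      omega
    · simp only [hX2, hXD, hcoeffA, hcoeffC]
      have h1 := hcount2 (m+2)
      have h2 := hcount2 m
      have h3 : (uN (m+2) : ℤ) = uN m + cN m := by exact_mod_cast hurec m
      push_cast at h1 h2 h3 ⊢
      linear_combination h1 - h2 + 2 * h3
end

section
/- For every odd integer d ≥ 1, the growth series of the structure group As(R_d) of the reflection solution of size d satisfies, in ℤ⟦t⟧: (1 − t) · 𝒢_{As(R_d)}(t) = 2·d·t + (1 − t)·(1 + (d−1)·t^2). (Equivalently, 𝒢_{As(R_d)}(t) = 2dt/(1−t) + 1 + (d−1)t^2.) -/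
/-- The structure group of the solution `(X, r_▷)` with `r_▷(x,y) = (x ▷ y, x)`. -/
abbrev StructureGroup {X : Type} (op : X → X → X) : Type :=
  PresentedGroup (structureGroupRels op)

/-- The reflection solution of size `d`: `x ▷ y = 2x - y` on `ℤ/dℤ`. -/
def reflOp (d : ℕ) : ZMod d → ZMod d → ZMod d := fun x y => 2 * x - y

namespace ReflGrowth

/-- sign (-1)^m as an element of ZMod d -/
def eps (d : ℕ) (m : ℤ) : ZMod d := ((m.negOnePow : ℤ) : ZMod d)

lemma eps_add (d : ℕ) (m n : ℤ) : eps d (m + n) = eps d m * eps d n := by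
  unfold eps; rw [Int.negOnePow_add]; push_cast; ring

lemma eps_zero (d : ℕ) : eps d 0 = 1 := by simp [eps]

lemma eps_neg (d : ℕ) (m : ℤ) : eps d (-m) = eps d m := by
  simp [eps, Int.negOnePow_neg]

lemma eps_even (d : ℕ) (m : ℤ) (h : Even m) : eps d m = 1 := by
  simp [eps, Int.negOnePow_even m h]

lemma eps_odd (d : ℕ) (m : ℤ) (h : Odd m) : eps d m = -1 := by
  simp [eps, Int.negOnePow_odd m h]

lemma eps_one (d : ℕ) : eps d 1 = -1 := eps_odd d 1 odd_one

lemma eps_mul_self (d : ℕ) (m : ℤ) : eps d m * eps d m = 1 := by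
  rw [← eps_add]; exact eps_even d _ ⟨m, rfl⟩

@[ext]
structure K (d : ℕ) where
  a : ZMod d
  n : ℤ

instance (d : ℕ) : Mul (K d) := ⟨fun p q => ⟨p.a + eps d p.n * q.a, p.n + q.n⟩⟩
instance (d : ℕ) : One (K d) := ⟨⟨0, 0⟩⟩
instance (d : ℕ) : Inv (K d) := ⟨fun p => ⟨-(eps d p.n * p.a), -p.n⟩⟩

lemma K.mul_def' {d : ℕ} (p q : K d) : p * q = ⟨p.a + eps d p.n * q.a, p.n + q.n⟩ := rfl
lemma K.one_def' {d : ℕ} : (1 : K d) = ⟨0, 0⟩ := rfl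
lemma K.inv_def' {d : ℕ} (p : K d) : p⁻¹ = ⟨-(eps d p.n * p.a), -p.n⟩ := rfl

instance (d : ℕ) : Group (K d) where
  mul_assoc p q r := by
    simp only [K.mul_def', eps_add]; ext <;> dsimp <;> ring
  one_mul p := by simp [K.mul_def', K.one_def', eps_zero]
  mul_one p := by simp [K.mul_def', K.one_def']
  inv_mul_cancel p := by
    simp [K.mul_def', K.inv_def', K.one_def', eps_neg]

variable {d : ℕ}

lemma K.mul_def (p q : K d) : p * q = ⟨p.a + eps d p.n * q.a, p.n + q.n⟩ := rfl

lemma K.one_def : (1 : K d) = ⟨0, 0⟩ := rfl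

lemma K.inv_def (p : K d) : p⁻¹ = ⟨-(eps d p.n * p.a), -p.n⟩ := rfl

@[simp] lemma K.n_mul (p q : K d) : (p * q).n = p.n + q.n := rfl
@[simp] lemma K.n_one : (1 : K d).n = 0 := rfl
@[simp] lemma K.n_inv (p : K d) : (p⁻¹).n = -p.n := rfl
@[simp] lemma K.a_one : (1 : K d).a = 0 := rfl


abbrev G (d : ℕ) := PresentedGroup (structureGroupRels (reflOp d))

def e {d : ℕ} (x : ZMod d) : G d := PresentedGroup.of x

variable {d : ℕ}

lemma rel (x y : ZMod d) : e x * e y = e (2 * x - y) * e x := by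
  have hm : (FreeGroup.of x * FreeGroup.of y *
      (FreeGroup.of (reflOp d x y) * FreeGroup.of x)⁻¹) ∈ structureGroupRels (reflOp d) :=
    ⟨x, y, rfl⟩
  have h2 : PresentedGroup.mk (structureGroupRels (reflOp d))
      (FreeGroup.of x * FreeGroup.of y * (FreeGroup.of (reflOp d x y) * FreeGroup.of x)⁻¹) = 1 := by
    exact (QuotientGroup.eq_one_iff _).mpr (Subgroup.subset_normalClosure hm)
  rw [map_mul, map_mul, map_inv, map_mul] at h2
  have := mul_inv_eq_one.mp h2
  exact this


def t {d : ℕ} (x : ZMod d) : G d := e x * (e 0)⁻¹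

lemma h1 (y : ZMod d) : (e 0)⁻¹ * e y = e (-y) * (e 0)⁻¹ := by
  have A := rel (0 : ZMod d) (-y)
  rw [show (2 * (0:ZMod d) - -y) = y by ring] at A
  -- A : e 0 * e (-y) = e y * e 0
  have := congrArg (fun g => (e (0:ZMod d))⁻¹ * g * (e (0:ZMod d))⁻¹) A
  simpa [mul_assoc] using this.symm

lemma t_zero : t (0 : ZMod d) = 1 := mul_inv_cancel _

lemma L5 (x y : ZMod d) : t x * t y = t (2*x + y) * t (-x) := by
  unfold t
  have key : e x * (e 0)⁻¹ * (e y * (e 0)⁻¹)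
      = e (2*x+y) * (e x * (e 0)⁻¹ * (e 0)⁻¹) := by
    calc e x * (e 0)⁻¹ * (e y * (e 0)⁻¹)
        = e x * ((e 0)⁻¹ * e y) * (e 0)⁻¹ := by group
      _ = e x * (e (-y) * (e 0)⁻¹) * (e 0)⁻¹ := by rw [h1]
      _ = (e x * e (-y)) * (e 0)⁻¹ * (e 0)⁻¹ := by group
      _ = (e (2*x+y) * e x) * (e 0)⁻¹ * (e 0)⁻¹ := by
            rw [show e x * e (-y) = e (2*x+y) * e x by
              have := rel x (-y); rwa [show 2*x - -y = 2*x + y by ring] at this]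
      _ = e (2*x+y) * (e x * (e 0)⁻¹ * (e 0)⁻¹) := by group
  have key2 : e (2*x+y) * (e 0)⁻¹ * (e (-x) * (e 0)⁻¹)
      = e (2*x+y) * (e x * (e 0)⁻¹ * (e 0)⁻¹) := by
    calc e (2*x+y) * (e 0)⁻¹ * (e (-x) * (e 0)⁻¹)
        = e (2*x+y) * ((e 0)⁻¹ * e (-x)) * (e 0)⁻¹ := by group
      _ = e (2*x+y) * (e x * (e 0)⁻¹) * (e 0)⁻¹ := by
            rw [show (e (0:ZMod d))⁻¹ * e (-x) = e x * (e 0)⁻¹ by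
              have := h1 (-x); rwa [neg_neg] at this]
      _ = e (2*x+y) * (e x * (e 0)⁻¹ * (e 0)⁻¹) := by group
  rw [key, ← key2]

lemma L7 (x : ZMod d) : t x = t (2*x) * t (-x) := by
  have := L5 x 0
  simpa [t_zero] using this

lemma L8a (x : ZMod d) : t (2*x) * t (-(2*x)) = 1 := by
  have h1' : t (2*x) = t x * (t (-x))⁻¹ := by
    have := L7 x; rw [this]; group
  have h2' : t (-(2*x)) = t (-x) * (t x)⁻¹ := by
    have := L7 (-x); rw [show 2 * -x = -(2*x) by ring, neg_neg] at this
    rw [this]; group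
  rw [h1', h2']; group

/-- the inverse of 2 in ZMod d -/
def cc (d : ℕ) : ZMod d := (((d+1)/2 : ℕ) : ZMod d)

lemma two_cc (hd : Odd d) : (2 : ZMod d) * cc d = 1 := by
  obtain ⟨k, hk⟩ := hd
  have h2 : (d+1)/2 = k+1 := by omega
  rw [cc, h2]
  have h1' : ((2*k+1 : ℕ) : ZMod d) = 0 := by rw [← hk]; exact ZMod.natCast_self d
  push_cast at h1' ⊢
  linear_combination h1'

lemma t_mul_t_neg (hd : Odd d) (m : ZMod d) : t m * t (-m) = 1 := by
  have hm : m = 2 * (cc d * m) := by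
    rw [← mul_assoc, two_cc hd, one_mul]
  rw [hm]; exact L8a _

lemma t_neg (hd : Odd d) (m : ZMod d) : t (-m) = (t m)⁻¹ :=
  (inv_eq_of_mul_eq_one_right (t_mul_t_neg hd m)).symm

lemma t_conj (hd : Odd d) (x y : ZMod d) : t x * t y * t x = t (2*x + y) := by
  have := L5 x y
  rw [t_neg hd x] at this
  rw [this]; group

lemma t_pow (hd : Odd d) : ∀ k : ℕ, ∀ x : ZMod d, t ((k : ZMod d) * x) = (t x) ^ k := by
  intro k
  induction k using Nat.strong_induction_on with
  | _ k ih =>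
    match k with
    | 0 => intro x; simpa using t_zero
    | 1 => intro x; simp
    | (k+2) =>
      intro x
      have h2 : (((k+2 : ℕ) : ZMod d)) * x = 2*x + (k : ZMod d) * x := by push_cast; ring
      rw [h2, ← t_conj hd, ih k (by omega)]
      rw [pow_succ, ← pow_succ']


section Iso
variable (d : ℕ)

noncomputable def TT : G d := t (cc d)
noncomputable def V : G d := e (0 : ZMod d)

variable {d}

lemma hd_nezero (hd : Odd d) : NeZero d := ⟨by rintro rfl; simp [Nat.odd_iff] at hd⟩

lemma TT_pow_d (hd : Odd d) : (TT d) ^ d = 1 := by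
  have := t_pow hd d (cc d)
  rw [ZMod.natCast_self, zero_mul, t_zero] at this
  exact this.symm

noncomputable def tau {d : ℕ} (a : ZMod d) : G d := (TT d) ^ a.val

lemma tau_add (hd : Odd d) (a b : ZMod d) : tau (a + b) = tau a * tau b := by
  haveI := hd_nezero hd
  rw [tau, tau, tau, ZMod.val_add, ← pow_eq_pow_mod _ (TT_pow_d hd), pow_add]

lemma tau_zero : tau (0 : ZMod d) = 1 := by
  rw [tau, ZMod.val_zero, pow_zero]

lemma tau_neg (hd : Odd d) (a : ZMod d) : tau (-a) = (tau a)⁻¹ := by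
  have : tau a * tau (-a) = 1 := by
    rw [← tau_add hd, add_neg_cancel, tau_zero]
  exact (inv_eq_of_mul_eq_one_right this).symm

lemma t_eq_tau (hd : Odd d) (x : ZMod d) : t x = tau (2 * x) := by
  haveI := hd_nezero hd
  have h := t_pow hd (2*x).val (cc d)
  rw [ZMod.natCast_zmod_val] at h
  rw [show (2*x) * cc d = x by rw [mul_comm 2 x, mul_assoc, two_cc hd, mul_one]] at h
  rw [h]; rfl

lemma V_conj_t (x : ZMod d) : V d * t x * (V d)⁻¹ = t (-x) := by
  unfold V t
  have A := rel (0:ZMod d) x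
  rw [show 2*(0:ZMod d) - x = -x by ring] at A
  calc e (0:ZMod d) * (e x * (e 0)⁻¹) * (e 0)⁻¹
      = (e (0:ZMod d) * e x) * (e 0)⁻¹ * (e 0)⁻¹ := by group
    _ = (e (-x) * e (0:ZMod d)) * (e 0)⁻¹ * (e 0)⁻¹ := by rw [A]
    _ = e (-x) * (e 0)⁻¹ := by group

lemma V_conj_TT (hd : Odd d) : V d * TT d * (V d)⁻¹ = (TT d)⁻¹ := by
  rw [TT, V_conj_t, t_neg hd]

lemma conj_inv_gen {H : Type*} [Group H] {v x : H} (h : v * x * v⁻¹ = x⁻¹) :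
    v * x⁻¹ * v⁻¹ = x := by
  have h3 := congrArg Inv.inv h
  simp only [mul_inv_rev, inv_inv] at h3
  simpa [mul_assoc] using h3

lemma conj_inv_of_conj_inv {H : Type*} [Group H] {v x : H} (h : v * x * v⁻¹ = x⁻¹) :
    v⁻¹ * x * v = x⁻¹ := by
  have h2 := conj_inv_gen h
  have h5 := congrArg (fun g => g * v) h2
  have h6 : v * x⁻¹ = x * v := by simpa [mul_assoc] using h5
  have h7 := congrArg (fun g => v⁻¹ * g) h6.symm
  simpa [mul_assoc] using h7

lemma V_zpow_conj (hd : Odd d) : ∀ m : ℤ,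
    (V d)^m * TT d * (V d)^(-m) = if Even m then TT d else (TT d)⁻¹ := by
  intro m
  induction m using Int.induction_on with
  | zero => simp
  | succ k ih =>
    have hstep : (V d)^((k:ℤ)+1) * TT d * (V d)^(-((k:ℤ)+1))
        = V d * ((V d)^(k:ℤ) * TT d * (V d)^(-(k:ℤ))) * (V d)⁻¹ := by group
    rw [hstep, ih]
    by_cases hk : Even (k:ℤ)
    · rw [if_pos hk, if_neg (by rw [Int.even_add_one]; simpa using hk), V_conj_TT hd]
    · rw [if_neg hk, if_pos (Int.even_add_one.mpr hk), conj_inv_gen (V_conj_TT hd)]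
  | pred k ih =>
    have hstep : (V d)^(-(k:ℤ)-1) * TT d * (V d)^(-(-(k:ℤ)-1))
        = (V d)⁻¹ * ((V d)^(-(k:ℤ)) * TT d * (V d)^(-(-(k:ℤ)))) * V d := by group
    rw [hstep, ih]
    by_cases hk : Even (-(k:ℤ))
    · rw [if_pos hk, if_neg (by rw [Int.even_sub_one]; simpa [even_neg] using hk), conj_inv_of_conj_inv (V_conj_TT hd)]
    · rw [if_neg hk, if_pos (by rw [Int.even_sub_one]; simpa [even_neg] using hk)]
      exact conj_inv_gen (conj_inv_of_conj_inv (V_conj_TT hd))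

lemma V_zpow_conj' (hd : Odd d) (m : ℤ) :
    (V d)^m * TT d * ((V d)^m)⁻¹ = if Even m then TT d else (TT d)⁻¹ := by
  rw [← zpow_neg]; exact V_zpow_conj hd m

lemma V_zpow_conj_tau (hd : Odd d) (m : ℤ) (b : ZMod d) :
    (V d)^m * tau b * ((V d)^m)⁻¹ = tau (eps d m * b) := by
  rw [tau, ← conj_pow, V_zpow_conj' hd]
  by_cases hm : Even m
  · rw [if_pos hm, eps_even d m hm, one_mul, tau]
  · rw [if_neg hm, eps_odd d m (Int.not_even_iff_odd.mp hm), inv_pow, ← tau,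
      ← tau_neg hd, neg_one_mul]

noncomputable def psi {d : ℕ} (p : K d) : G d := tau p.a * (V d)^p.n

lemma psi_mul (hd : Odd d) (p q : K d) : psi (p * q) = psi p * psi q := by
  rw [psi, psi, psi, K.mul_def']
  dsimp only
  rw [tau_add hd]
  have key : tau (eps d p.n * q.a) * (V d)^p.n = (V d)^p.n * tau q.a := by
    rw [← V_zpow_conj_tau hd p.n q.a]; group
  calc tau p.a * tau (eps d p.n * q.a) * (V d)^(p.n + q.n)
      = tau p.a * ((tau (eps d p.n * q.a) * (V d)^p.n) * (V d)^q.n) := by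
        rw [zpow_add]; group
    _ = tau p.a * (((V d)^p.n * tau q.a) * (V d)^q.n) := by rw [key]
    _ = tau p.a * (V d)^p.n * (tau q.a * (V d)^q.n) := by group

noncomputable def psiHom (hd : Odd d) : K d →* G d :=
  MonoidHom.mk' psi (psi_mul hd)

variable (d) in
def fK (x : ZMod d) : K d := ⟨2*x, 1⟩

lemma hrels : ∀ r ∈ structureGroupRels (reflOp d), FreeGroup.lift (fK d) r = 1 := by
  rintro r ⟨x, y, rfl⟩
  rw [map_mul, map_mul, map_inv, map_mul]
  simp only [FreeGroup.lift_apply_of]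
  rw [mul_inv_eq_one]
  ext
  · show (2*x : ZMod d) + eps d 1 * (2*y) = 2*(reflOp d x y) + eps d 1 * (2*x)
    rw [eps_one, reflOp]; ring
  · rfl

variable (d) in
noncomputable def theta : G d →* K d := PresentedGroup.toGroup hrels

lemma theta_e (x : ZMod d) : theta d (e x) = ⟨2*x, 1⟩ :=
  PresentedGroup.toGroup.of hrels

lemma theta_TT (hd : Odd d) : theta d (TT d) = ⟨1, 0⟩ := by
  rw [TT, t, map_mul, map_inv, theta_e, theta_e]
  rw [K.inv_def', K.mul_def']
  ext
  · show (2 * cc d) + eps d 1 * _ = 1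
    rw [eps_one, two_cc hd]
    dsimp
    ring
  · rfl

lemma pow10 : ∀ k : ℕ, (⟨1, 0⟩ : K d)^k = ⟨(k : ZMod d), 0⟩ := by
  intro k
  induction k with
  | zero => simp [K.one_def']
  | succ n ih =>
    rw [pow_succ, ih, K.mul_def']
    ext
    · show (n : ZMod d) + eps d 0 * 1 = ((n+1 : ℕ) : ZMod d)
      rw [eps_zero]; push_cast; ring
    · rfl

lemma zpow01 : ∀ n : ℤ, (⟨0, 1⟩ : K d)^n = ⟨0, n⟩ := by
  intro n
  induction n using Int.induction_on with
  | zero => simp [K.one_def']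
  | succ k ih =>
    rw [zpow_add_one, ih, K.mul_def']
    ext
    · show (0 : ZMod d) + eps d k * 0 = 0
      ring
    · rfl
  | pred k ih =>
    rw [zpow_sub_one, ih, K.inv_def', K.mul_def']
    ext
    · show (0 : ZMod d) + eps d (-k) * -(eps d 1 * 0) = 0
      ring
    · rfl

lemma theta_tau (hd : Odd d) (a : ZMod d) : theta d (tau a) = ⟨a, 0⟩ := by
  haveI := hd_nezero hd
  rw [tau, map_pow, theta_TT hd, pow10, ZMod.natCast_zmod_val]

lemma theta_V : theta d (V d) = ⟨0, 1⟩ := by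
  rw [V, theta_e]
  ext
  · show 2 * (0 : ZMod d) = 0
    ring
  · rfl

lemma theta_psi (hd : Odd d) (p : K d) : theta d (psi p) = p := by
  rw [psi, map_mul, theta_tau hd, map_zpow, theta_V, zpow01, K.mul_def']
  ext
  · show p.a + eps d 0 * 0 = p.a
    ring
  · show (0 : ℤ) + p.n = p.n
    ring

lemma psi_theta_e (hd : Odd d) (x : ZMod d) : psi (theta d (e x)) = e x := by
  rw [theta_e, psi]
  dsimp only
  rw [← t_eq_tau hd, zpow_one, t, V]
  group

lemma psi_theta (hd : Odd d) (g : G d) : psi (theta d g) = g := by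
  have hcomp : (psiHom hd).comp (theta d) = MonoidHom.id (G d) := by
    apply PresentedGroup.ext
    intro x
    exact psi_theta_e hd x
  exact DFunLike.congr_fun hcomp g

variable (d) in
def SK : Set (K d) := {p | p.n = 1}

lemma mem_cond (x : K d) : (x ∈ SK d ∨ x⁻¹ ∈ SK d) ↔ (x.n = 1 ∨ x.n = -1) := by
  simp only [SK, Set.mem_setOf_eq, K.n_inv]
  omega

lemma lb (L : List (K d)) (h : ∀ x ∈ L, x.n = 1 ∨ x.n = -1) :
    L.prod.n.natAbs ≤ L.length ∧ (L.prod.n - L.length) % 2 = 0 := by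
  induction L with
  | nil => simp
  | cons x L ih =>
    have hx := h x List.mem_cons_self
    have hL := ih (fun y hy => h y (List.mem_cons_of_mem _ hy))
    rw [List.prod_cons, K.n_mul, List.length_cons]
    push_cast
    omega

lemma prod_rep_pos (k : ℕ) : (List.replicate k (⟨0,1⟩ : K d)).prod = ⟨0, (k:ℤ)⟩ := by
  induction k with
  | zero => simp [K.one_def']
  | succ n ih =>
    rw [List.replicate_succ', List.prod_append, ih]
    rw [List.prod_singleton, K.mul_def']
    ext
    · show (0 : ZMod d) + eps d n * 0 = 0
      ring
    · show ((n : ℤ)) + 1 = ((n+1 : ℕ) : ℤ)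
      push_cast; ring

lemma prod_rep_neg (k : ℕ) : (List.replicate k (⟨0,-1⟩ : K d)).prod = ⟨0, -(k:ℤ)⟩ := by
  induction k with
  | zero => simp [K.one_def']
  | succ n ih =>
    rw [List.replicate_succ', List.prod_append, ih]
    rw [List.prod_singleton, K.mul_def']
    ext
    · show (0 : ZMod d) + eps d (-n) * 0 = 0
      ring
    · show (-(n : ℤ)) + -1 = -((n+1 : ℕ) : ℤ)
      push_cast; ring

lemma wlK (p : K d) :
    wordLength (SK d) p = if p.n = 0 then (if p.a = 0 then 0 else 2) else p.n.natAbs := by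
  set M := {n | ∃ L : List (K d),
    L.length = n ∧ (∀ x ∈ L, x ∈ SK d ∨ x⁻¹ ∈ SK d) ∧ L.prod = p} with hM
  set tgt := if p.n = 0 then (if p.a = 0 then 0 else 2) else p.n.natAbs with htgt
  have hmem : tgt ∈ M := by
    rcases eq_or_ne p.n 0 with h0 | h0
    · rcases eq_or_ne p.a 0 with ha | ha
      · refine ⟨[], by simp [htgt, h0, ha], by simp, ?_⟩
        rw [List.prod_nil, K.one_def']
        ext <;> simp [ha.symm, h0.symm]
      · refine ⟨[⟨p.a, 1⟩, ⟨0, -1⟩], by simp [htgt, h0, ha], ?_, ?_⟩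
        · intro x hx
          apply (mem_cond x).mpr
          simp at hx
          rcases hx with rfl | rfl <;> simp
        · rw [List.prod_cons, List.prod_singleton, K.mul_def']
          ext
          · show p.a + eps d 1 * 0 = p.a
            ring
          · show (1 : ℤ) + -1 = p.n
            omega
    · rcases lt_or_gt_of_ne h0 with hneg | hpos
      · refine ⟨⟨p.a, -1⟩ :: List.replicate (p.n.natAbs - 1) ⟨0, -1⟩, ?_, ?_, ?_⟩
        · simp [htgt, h0, List.length_replicate]
          omega
        · intro x hx
          apply (mem_cond x).mpr
          rcases List.mem_cons.mp hx with rfl | hx'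
          · simp
          · rw [List.eq_of_mem_replicate hx']; simp
        · rw [List.prod_cons, prod_rep_neg, K.mul_def']
          ext
          · show p.a + eps d (-1) * 0 = p.a
            ring
          · show (-1 : ℤ) + -((p.n.natAbs - 1 : ℕ) : ℤ) = p.n
            omega
      · refine ⟨⟨p.a, 1⟩ :: List.replicate (p.n.natAbs - 1) ⟨0, 1⟩, ?_, ?_, ?_⟩
        · simp [htgt, h0, List.length_replicate]
          omega
        · intro x hx
          apply (mem_cond x).mpr
          rcases List.mem_cons.mp hx with rfl | hx'
          · simp
          · rw [List.eq_of_mem_replicate hx']; simp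
        · rw [List.prod_cons, prod_rep_pos, K.mul_def']
          ext
          · show p.a + eps d 1 * 0 = p.a
            ring
          · show (1 : ℤ) + ((p.n.natAbs - 1 : ℕ) : ℤ) = p.n
            omega
  have hlbM : ∀ m ∈ M, tgt ≤ m := by
    rintro m ⟨L, hlen, hcond, hprod⟩
    have hc' : ∀ x ∈ L, x.n = 1 ∨ x.n = -1 := fun x hx => (mem_cond x).mp (hcond x hx)
    obtain ⟨hb1, hb2⟩ := lb L hc'
    rw [hprod] at hb1 hb2
    rcases eq_or_ne p.n 0 with h0 | h0
    · rcases eq_or_ne p.a 0 with ha | ha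
      · simp [htgt, h0, ha]
      · have hL0 : L ≠ [] := by
          rintro rfl
          rw [List.prod_nil] at hprod
          exact ha (by rw [← hprod]; rfl)
        have : L.length ≠ 0 := fun hc => hL0 (List.length_eq_zero_iff.mp hc)
        rw [htgt, if_pos h0, if_neg ha]
        rw [h0] at hb2
        omega
    · rw [htgt, if_neg h0]
      omega
  have hne : M.Nonempty := ⟨tgt, hmem⟩
  exact le_antisymm (Nat.sInf_le hmem) (hlbM _ (Nat.sInf_mem hne))

lemma line_eq (c : ℤ) :
    {p : K d | p.n = c} = (fun a : ZMod d => (⟨a, c⟩ : K d)) '' Set.univ := by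
  ext p
  simp only [Set.mem_setOf_eq, Set.image_univ, Set.mem_range]
  constructor
  · intro h
    exact ⟨p.a, by ext <;> simp [h]⟩
  · rintro ⟨b, rfl⟩
    rfl

lemma mk_inj (c : ℤ) : Function.Injective (fun a : ZMod d => (⟨a, c⟩ : K d)) := by
  intro a b h
  exact congrArg K.a h

lemma line_finite (hd : Odd d) (c : ℤ) : {p : K d | p.n = c}.Finite := by
  haveI := hd_nezero hd
  rw [line_eq]
  exact (Set.finite_univ).image _

lemma card_line (hd : Odd d) (c : ℤ) : {p : K d | p.n = c}.ncard = d := by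
  haveI := hd_nezero hd
  rw [line_eq, Set.ncard_image_of_injective _ (mk_inj c), Set.ncard_univ,
    Nat.card_eq_fintype_card, ZMod.card]

lemma B_eq : {p : K d | p.n = 0 ∧ p.a ≠ 0}
    = (fun a : ZMod d => (⟨a, 0⟩ : K d)) '' ({0}ᶜ) := by
  ext p
  simp only [Set.mem_setOf_eq, Set.mem_image, Set.mem_compl_iff, Set.mem_singleton_iff]
  constructor
  · rintro ⟨h0, ha⟩
    exact ⟨p.a, ha, by ext <;> simp [h0]⟩
  · rintro ⟨b, hb, rfl⟩
    exact ⟨rfl, hb⟩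

lemma B_finite (hd : Odd d) : {p : K d | p.n = 0 ∧ p.a ≠ 0}.Finite := by
  haveI := hd_nezero hd
  rw [B_eq]
  exact (Set.toFinite _).image _

lemma card_B (hd : Odd d) : {p : K d | p.n = 0 ∧ p.a ≠ 0}.ncard = d - 1 := by
  haveI := hd_nezero hd
  rw [B_eq, Set.ncard_image_of_injective _ (mk_inj 0)]
  have : ({0}ᶜ : Set (ZMod d)) = Set.univ \ {0} := by
    ext; simp
  rw [this, Set.ncard_diff (Set.subset_univ ({0} : Set (ZMod d))), Set.ncard_univ,
    Set.ncard_singleton, Nat.card_eq_fintype_card, ZMod.card]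

lemma sphere0 : {p : K d | wordLength (SK d) p = 0} = {1} := by
  ext p
  simp only [Set.mem_setOf_eq, wlK, Set.mem_singleton_iff]
  constructor
  · intro h
    rcases eq_or_ne p.n 0 with h0 | h0
    · rcases eq_or_ne p.a 0 with ha | ha
      · ext <;> simp [h0, ha, K.one_def']
      · simp [h0, ha] at h
    · simp only [if_neg h0] at h
      omega
  · rintro rfl
    simp [K.one_def']

lemma sphere_n (n : ℕ) (h1 : 1 ≤ n) (h2 : n ≠ 2) :
    {p : K d | wordLength (SK d) p = n} = {p : K d | p.n = n} ∪ {p : K d | p.n = -(n:ℤ)} := by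
  ext p
  simp only [Set.mem_setOf_eq, wlK, Set.mem_union]
  rcases eq_or_ne p.n 0 with h0 | h0
  · rcases eq_or_ne p.a 0 with ha | ha <;> simp [h0, ha] <;> omega
  · simp only [if_neg h0]
    omega

lemma sphere2 :
    {p : K d | wordLength (SK d) p = 2}
      = ({p : K d | p.n = 2} ∪ {p : K d | p.n = -2}) ∪ {p : K d | p.n = 0 ∧ p.a ≠ 0} := by
  ext p
  simp only [Set.mem_setOf_eq, wlK, Set.mem_union]
  rcases eq_or_ne p.n 0 with h0 | h0
  · rcases eq_or_ne p.a 0 with ha | ha <;> simp [h0, ha] <;> omega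
  · simp only [if_neg h0]
    omega

lemma card_sphereK (hd : Odd d) (n : ℕ) :
    {p : K d | wordLength (SK d) p = n}.ncard
      = if n = 0 then 1 else if n = 2 then 3*d - 1 else 2*d := by
  rcases eq_or_ne n 0 with rfl | hn0
  · rw [sphere0, Set.ncard_singleton]
    simp
  rcases eq_or_ne n 2 with rfl | hn2
  · rw [sphere2]
    have hdisj1 : Disjoint {p : K d | p.n = 2} {p : K d | p.n = -2} := by
      rw [Set.disjoint_left]
      intro p h1 h2
      simp only [Set.mem_setOf_eq] at h1 h2
      omega
    have hdisj2 : Disjoint ({p : K d | p.n = 2} ∪ {p : K d | p.n = -2})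
        {p : K d | p.n = 0 ∧ p.a ≠ 0} := by
      rw [Set.disjoint_left]
      intro p h1 h2
      simp only [Set.mem_union, Set.mem_setOf_eq] at h1 h2
      omega
    rw [Set.ncard_union_eq hdisj2 (((line_finite hd 2).union (line_finite hd (-2))))
        (B_finite hd),
      Set.ncard_union_eq hdisj1 (line_finite hd 2) (line_finite hd (-2)),
      card_line hd, card_line hd, card_B hd]
    have hdpos : 0 < d := Nat.pos_of_ne_zero (hd_nezero hd).out
    norm_num
    omega
  · rw [sphere_n n (by omega) hn2]
    have hdisj : Disjoint {p : K d | p.n = (n:ℤ)} {p : K d | p.n = -(n:ℤ)} := by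
      rw [Set.disjoint_left]
      intro p h1 h2
      simp only [Set.mem_setOf_eq] at h1 h2
      omega
    rw [Set.ncard_union_eq hdisj (line_finite hd _) (line_finite hd _),
      card_line hd, card_line hd]
    rw [if_neg hn0, if_neg hn2]
    omega

lemma psi_gen (hd : Odd d) (a : ZMod d) : psi (⟨a, 1⟩ : K d) = e (cc d * a) := by
  rw [psi]
  dsimp only
  rw [zpow_one]
  have htau : tau a = t (cc d * a) := by
    rw [t_eq_tau hd]
    congr 1
    rw [← mul_assoc, two_cc hd, one_mul]
  rw [htau, t, V]
  group

lemma mem_S_iff (hd : Odd d) (x : G d) :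
    x ∈ Set.range (e (d := d)) ↔ theta d x ∈ SK d := by
  constructor
  · rintro ⟨y, rfl⟩
    rw [theta_e]
    exact rfl
  · intro h
    have hform : theta d x = ⟨(theta d x).a, 1⟩ := by
      ext
      · rfl
      · exact h
    have : x = psi (theta d x) := (psi_theta hd x).symm
    rw [hform, psi_gen hd] at this
    exact ⟨_, this.symm⟩

lemma wl_transfer (hd : Odd d) (g : G d) :
    wordLength (Set.range (e (d := d))) g = wordLength (SK d) (theta d g) := by
  unfold wordLength
  congr 1
  ext m
  simp only [Set.mem_setOf_eq]
  constructor
  · rintro ⟨L, hlen, hcond, hprod⟩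
    refine ⟨L.map (theta d), by simp [hlen], ?_, ?_⟩
    · intro x hx
      obtain ⟨y, hy, rfl⟩ := List.mem_map.mp hx
      rcases hcond y hy with h | h
      · exact Or.inl ((mem_S_iff hd y).mp h)
      · refine Or.inr ?_
        rw [← map_inv]
        exact (mem_S_iff hd y⁻¹).mp h
    · rw [← map_list_prod (theta d) L, hprod]
  · rintro ⟨L, hlen, hcond, hprod⟩
    refine ⟨L.map (psiHom hd), by simp [hlen], ?_, ?_⟩
    · intro x hx
      obtain ⟨y, hy, rfl⟩ := List.mem_map.mp hx
      rcases hcond y hy with h | h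
      · refine Or.inl ((mem_S_iff hd _).mpr ?_)
        show theta d (psi y) ∈ SK d
        rw [theta_psi hd]
        exact h
      · refine Or.inr ((mem_S_iff hd _).mpr ?_)
        rw [map_inv, show theta d ((psiHom hd) y) = y from theta_psi hd y]
        exact h
    · rw [← map_list_prod (psiHom hd) L, hprod]
      exact psi_theta hd g

lemma psi_inj (hd : Odd d) : Function.Injective (psi : K d → G d) :=
  Function.LeftInverse.injective (theta_psi hd)

lemma sphere_transfer (hd : Odd d) (n : ℕ) :
    {g : G d | wordLength (Set.range (e (d := d))) g = n}
      = psi '' {p : K d | wordLength (SK d) p = n} := by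
  ext g
  simp only [Set.mem_setOf_eq, Set.mem_image]
  constructor
  · intro h
    exact ⟨theta d g, by rw [← wl_transfer hd]; exact h, psi_theta hd g⟩
  · rintro ⟨p, hp, rfl⟩
    rw [wl_transfer hd, theta_psi hd]
    exact hp

lemma card_sphereG (hd : Odd d) (n : ℕ) :
    {g : G d | wordLength (Set.range (e (d := d))) g = n}.ncard
      = if n = 0 then 1 else if n = 2 then 3*d - 1 else 2*d := by
  rw [sphere_transfer hd, Set.ncard_image_of_injective _ (psi_inj hd), card_sphereK hd]

lemma growth_eq (hd : Odd d) :
    growthSeries (Set.range (e (d := d)))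
      = PowerSeries.mk (fun n => ((if n = 0 then 1 else if n = 2 then 3*d - 1 else 2*d : ℕ) : ℤ)) := by
  unfold growthSeries
  apply PowerSeries.ext
  intro n
  rw [PowerSeries.coeff_mk, PowerSeries.coeff_mk, card_sphereG hd]

lemma geom : (1 - PowerSeries.X) * PowerSeries.mk (fun _ => (1:ℤ)) = 1 := by
  apply PowerSeries.ext
  intro n
  rw [sub_mul, one_mul, map_sub]
  cases n with
  | zero =>
    rw [mul_comm PowerSeries.X, PowerSeries.coeff_zero_mul_X]
    simp [PowerSeries.coeff_mk, PowerSeries.coeff_one]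
  | succ n =>
    rw [PowerSeries.coeff_succ_X_mul]
    simp [PowerSeries.coeff_mk, PowerSeries.coeff_one]

lemma decomposition (hd : Odd d) :
    PowerSeries.mk (fun n => ((if n = 0 then 1 else if n = 2 then 3*d - 1 else 2*d : ℕ) : ℤ))
      = PowerSeries.C (2*(d:ℤ)) * (PowerSeries.X * PowerSeries.mk (fun _ => (1:ℤ)))
        + 1 + PowerSeries.C ((d:ℤ) - 1) * PowerSeries.X^2 := by
  have hdpos : 0 < d := Nat.pos_of_ne_zero (hd_nezero hd).out
  apply PowerSeries.ext
  intro n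
  rw [map_add, map_add, PowerSeries.coeff_C_mul, PowerSeries.coeff_C_mul,
    PowerSeries.coeff_X_pow, PowerSeries.coeff_one, PowerSeries.coeff_mk]
  match n with
  | 0 =>
    rw [mul_comm PowerSeries.X, PowerSeries.coeff_zero_mul_X]
    norm_num
  | 1 =>
    rw [PowerSeries.coeff_succ_X_mul, PowerSeries.coeff_mk]
    norm_num
  | 2 =>
    rw [PowerSeries.coeff_succ_X_mul, PowerSeries.coeff_mk]
    norm_num
    rw [Nat.cast_sub (by omega : 1 ≤ 3*d)]
    push_cast
    ring
  | (m+3) =>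
    rw [PowerSeries.coeff_succ_X_mul, PowerSeries.coeff_mk]
    have h1 : m + 3 ≠ 0 := by omega
    have h2 : m + 3 ≠ 2 := by omega
    rw [if_neg h1, if_neg h2, if_neg h1, if_neg h2]
    push_cast
    ring

end Iso
end ReflGrowth

/-- For odd `d`, `(1 - t)·𝒢_{As(R_d)}(t) = 2 d t + (1 - t)(1 + (d-1) t²)` in `ℤ⟦t⟧`. -/
theorem growthSeries_structureGroup_reflection (d : ℕ) (hd : Odd d) :
    (1 - PowerSeries.X) *
        growthSeries (Set.range (PresentedGroup.of (rels := structureGroupRels (reflOp d)))) =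
      2 * (d : PowerSeries ℤ) * PowerSeries.X +
        (1 - PowerSeries.X) *
          (1 + ((d : PowerSeries ℤ) - 1) * PowerSeries.X ^ 2) := by
  have hG : growthSeries (Set.range (PresentedGroup.of (rels := structureGroupRels (reflOp d))))
      = growthSeries (Set.range (ReflGrowth.e (d := d))) := rfl
  rw [hG, ReflGrowth.growth_eq hd, ReflGrowth.decomposition hd]
  have hcast : ((d : PowerSeries ℤ)) = PowerSeries.C (d : ℤ) := by
    rw [map_natCast]
  calc (1 - PowerSeries.X) *
        (PowerSeries.C (2*(d:ℤ)) * (PowerSeries.X * PowerSeries.mk (fun _ => (1:ℤ)))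
          + 1 + PowerSeries.C ((d:ℤ) - 1) * PowerSeries.X^2)
      = PowerSeries.C (2*(d:ℤ)) * PowerSeries.X
          * ((1 - PowerSeries.X) * PowerSeries.mk (fun _ => (1:ℤ)))
        + (1 - PowerSeries.X) * (1 + PowerSeries.C ((d:ℤ) - 1) * PowerSeries.X^2) := by
        ring
    _ = PowerSeries.C (2*(d:ℤ)) * PowerSeries.X
        + (1 - PowerSeries.X) * (1 + PowerSeries.C ((d:ℤ) - 1) * PowerSeries.X^2) := by
      rw [ReflGrowth.geom, mul_one]
    _ = 2 * (d : PowerSeries ℤ) * PowerSeries.X +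
        (1 - PowerSeries.X) * (1 + ((d : PowerSeries ℤ) - 1) * PowerSeries.X ^ 2) := by
      rw [hcast, map_mul, map_sub, map_one, map_ofNat]
end

section
/- Let a, b, c ∈ ℤ with a ≠ b. Then there exists a natural number n such that gcd(a + n·c, b + n·c) = gcd(a, b, c). Moreover, if a and b have different parity, then there exist both an even natural number n and an odd natural number n satisfying this equality. -/
private lemma gcd_add_of_dvd (x d y : ℤ) (h : d ∣ y) :
    Int.gcd (x + y) d = Int.gcd x d := by
  apply Nat.dvd_antisymm
  · apply Int.natCast_dvd_natCast.mp
    apply Int.dvd_coe_gcd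
    · have h1 : (↑(Int.gcd (x + y) d) : ℤ) ∣ x + y := (Int.gcd_dvd_left _ _)
      have h2 : (↑(Int.gcd (x + y) d) : ℤ) ∣ d := (Int.gcd_dvd_right _ _)
      have h3 : (↑(Int.gcd (x + y) d) : ℤ) ∣ y := h2.trans h
      simpa using dvd_sub h1 h3
    · exact (Int.gcd_dvd_right _ _)
  · apply Int.natCast_dvd_natCast.mp
    apply Int.dvd_coe_gcd
    · have h1 : (↑(Int.gcd x d) : ℤ) ∣ x := (Int.gcd_dvd_left _ _)
      have h2 : (↑(Int.gcd x d) : ℤ) ∣ d := (Int.gcd_dvd_right _ _)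
      exact dvd_add h1 (h2.trans h)
    · exact (Int.gcd_dvd_right _ _)

/-- Core lemma: coprime case. -/
private lemma core_lemma (b c d : ℤ) (hd : d ≠ 0)
    (h1 : Int.gcd (Int.gcd b c : ℤ) d = 1) :
    ∃ n : ℕ, ∀ k : ℕ, Int.gcd (b + ((n + k * d.natAbs : ℕ) : ℤ) * c) d = 1 := by
  classical
  set S : Finset ℕ := d.natAbs.primeFactors.filter (fun p : ℕ => ¬ ((p : ℤ) ∣ b)) with hS
  refine ⟨∏ p ∈ S, p, fun k => ?_⟩
  have hdvd : d ∣ ((k * d.natAbs : ℕ) : ℤ) * c := by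
    have h0 : d ∣ ((d.natAbs : ℤ)) := (Int.dvd_natAbs).mpr dvd_rfl
    rw [Nat.cast_mul]
    exact Dvd.dvd.mul_right (Dvd.dvd.mul_left h0 (k : ℤ)) c
  have hrw : b + ((∏ p ∈ S, p) + k * d.natAbs : ℕ) * c
      = (b + ((∏ p ∈ S, p : ℕ) : ℤ) * c) + ((k * d.natAbs : ℕ) : ℤ) * c := by
    push_cast; ring
  rw [hrw, gcd_add_of_dvd _ _ _ hdvd]
  -- now show gcd (b + N * c) d = 1 where N = ∏ p ∈ S, p
  set N : ℕ := ∏ p ∈ S, p with hN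
  by_contra hne
  have hg0 : Int.gcd (b + (N : ℤ) * c) d ≠ 0 := by
    intro h0
    exact hd (Int.gcd_eq_zero_iff.mp h0).2
  obtain ⟨p, hp, hpg⟩ := Nat.exists_prime_and_dvd hne
  have hpd : (p : ℤ) ∣ d := by
    have := Int.gcd_dvd_right (a := b + (N : ℤ) * c) (b := d)
    exact dvd_trans (Int.natCast_dvd_natCast.mpr hpg) this
  have hpbc : (p : ℤ) ∣ b + (N : ℤ) * c := by
    have := Int.gcd_dvd_left (a := b + (N : ℤ) * c) (b := d)
    exact dvd_trans (Int.natCast_dvd_natCast.mpr hpg) this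
  have hpZ : Prime (p : ℤ) := Int.prime_iff_natAbs_prime.mpr (by simpa using hp)
  by_cases hpb : (p : ℤ) ∣ b
  · -- p ∤ N and p ∤ c, contradiction with p ∣ N*c
    have hpN : ¬ p ∣ N := by
      intro hdvdN
      obtain ⟨q, hqS, hpq⟩ := (Nat.Prime.prime hp).exists_mem_finset_dvd hdvdN
      have hq : q.Prime := (Nat.mem_primeFactors.mp (Finset.mem_filter.mp hqS).1).1
      have : p = q := (Nat.prime_dvd_prime_iff_eq hp hq).mp hpq
      exact (Finset.mem_filter.mp hqS).2 (this ▸ hpb)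
    have hpc : ¬ (p : ℤ) ∣ c := by
      intro hpc
      have h4 : (p : ℤ) ∣ (Int.gcd b c : ℤ) := Int.dvd_coe_gcd hpb hpc
      have h5 : (p : ℤ) ∣ (Int.gcd (Int.gcd b c : ℤ) d : ℤ) := Int.dvd_coe_gcd h4 hpd
      rw [h1] at h5
      exact hp.one_lt.ne' (by exact_mod_cast Int.eq_one_of_dvd_one (by positivity) h5)
    have h6 : (p : ℤ) ∣ (N : ℤ) * c := by
      have := dvd_sub hpbc hpb
      simpa using this
    rcases hpZ.dvd_mul.mp h6 with h7 | h7
    · exact hpN (Int.natCast_dvd_natCast.mp h7)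
    · exact hpc h7
  · -- p ∈ S, so p ∣ N, so p ∣ b, contradiction
    have hpS : p ∈ S := by
      rw [hS, Finset.mem_filter, Nat.mem_primeFactors]
      exact ⟨⟨hp, by rwa [← Int.natCast_dvd_natCast, Int.natCast_natAbs, dvd_abs],
        Int.natAbs_ne_zero.mpr hd⟩, hpb⟩
    have hpN : (p : ℤ) ∣ (N : ℤ) := Int.natCast_dvd_natCast.mpr (Finset.dvd_prod_of_mem _ hpS)
    have : (p : ℤ) ∣ b := by
      have := dvd_sub hpbc (hpN.mul_right c)
      simpa using this
    exact hpb this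

/-- General lemma. -/
private lemma gen_lemma (b c d : ℤ) (hd : d ≠ 0) :
    ∃ n m : ℕ, m ≠ 0 ∧ m ∣ d.natAbs ∧ ∀ k : ℕ,
      Int.gcd (b + ((n + k * m : ℕ) : ℤ) * c) d = Int.gcd (Int.gcd b c : ℤ) d := by
  set g : ℕ := Int.gcd (Int.gcd b c : ℤ) d with hg
  have hg0 : g ≠ 0 := by
    intro h0
    exact hd (Int.gcd_eq_zero_iff.mp h0).2
  have hgb : (g : ℤ) ∣ b := by
    have h1 : (g : ℤ) ∣ (Int.gcd b c : ℤ) := (Int.gcd_dvd_left _ _)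
    exact h1.trans (Int.gcd_dvd_left _ _)
  have hgc : (g : ℤ) ∣ c := by
    have h1 : (g : ℤ) ∣ (Int.gcd b c : ℤ) := (Int.gcd_dvd_left _ _)
    exact h1.trans (Int.gcd_dvd_right _ _)
  have hgd : (g : ℤ) ∣ d := (Int.gcd_dvd_right _ _)
  obtain ⟨b', hb'⟩ := hgb
  obtain ⟨c', hc'⟩ := hgc
  obtain ⟨d', hd'⟩ := hgd
  have hd'0 : d' ≠ 0 := by
    rintro rfl; simp at hd'; exact hd hd'
  have hgbc : Int.gcd b c = g * Int.gcd b' c' := by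
    rw [hb', hc', Int.gcd_mul_left]; simp
  have hone : Int.gcd ((Int.gcd b' c' : ℕ) : ℤ) d' = 1 := by
    have : g = g * Int.gcd ((Int.gcd b' c' : ℕ) : ℤ) d' := by
      conv_lhs => rw [hg, hgbc, hd']
      push_cast
      rw [show (g : ℤ) * (Int.gcd b' c' : ℤ) = (g : ℤ) * (Int.gcd b' c' : ℤ) from rfl]
      rw [Int.gcd_mul_left]
      simp
    nth_rewrite 1 [show g = g * 1 by ring] at this
    exact (Nat.eq_of_mul_eq_mul_left (Nat.pos_of_ne_zero hg0) this).symm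
  obtain ⟨n, hn⟩ := core_lemma b' c' d' hd'0 hone
  refine ⟨n, d'.natAbs, Int.natAbs_ne_zero.mpr hd'0, ?_, fun k => ?_⟩
  · rw [hd']
    exact Int.natAbs_dvd_natAbs.mpr ⟨(g:ℤ), by rw [mul_comm]⟩
  · have hrw : b + ((n + k * d'.natAbs : ℕ) : ℤ) * c
        = (g : ℤ) * (b' + ((n + k * d'.natAbs : ℕ) : ℤ) * c') := by
      rw [hb', hc']; ring
    rw [hrw, hd', Int.gcd_mul_left, hn k]
    simp [hg]

/-- For `a ≠ b`, there is `n : ℕ` with `gcd (a + n c) (b + n c) = gcd (gcd a b) c`;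
if moreover `a` and `b` have different parity, such `n` can be found both even and odd. -/
theorem gcd_add_mul_eq_triple_gcd (a b c : ℤ) (hab : a ≠ b) :
    (∃ n : ℕ, Int.gcd (a + (n : ℤ) * c) (b + (n : ℤ) * c) = Int.gcd (Int.gcd a b : ℤ) c) ∧
    (((Even a ∧ Odd b) ∨ (Odd a ∧ Even b)) →
      (∃ n : ℕ, Even n ∧
        Int.gcd (a + (n : ℤ) * c) (b + (n : ℤ) * c) = Int.gcd (Int.gcd a b : ℤ) c) ∧
      (∃ n : ℕ, Odd n ∧
        Int.gcd (a + (n : ℤ) * c) (b + (n : ℤ) * c) = Int.gcd (Int.gcd a b : ℤ) c)) := by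
  set d : ℤ := a - b with hdd
  have hd : d ≠ 0 := sub_ne_zero.mpr hab
  obtain ⟨n, m, hm0, hmd, hmain⟩ := gen_lemma b c d hd
  -- reformulate: for all j, gcd (a + j*c) (b + j*c) = gcd (b + j*c) d
  have key : ∀ j : ℤ, Int.gcd (a + j * c) (b + j * c) = Int.gcd (b + j * c) d := by
    intro j
    have : a + j * c = (b + j * c) + d := by rw [hdd]; ring
    rw [this, add_comm (b + j * c) d, gcd_add_of_dvd d (b + j * c) (b + j * c) dvd_rfl,
      Int.gcd_comm]
  -- RHS identity: gcd (gcd a b) c = gcd (gcd b c) d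
  have rhs : Int.gcd (Int.gcd a b : ℤ) c = Int.gcd (Int.gcd b c : ℤ) d := by
    have h7 : a = d + b := by rw [hdd]; ring
    have h8 : Int.gcd a b = Int.gcd d b := by
      rw [h7, gcd_add_of_dvd d b b dvd_rfl]
    rw [h8]
    simp only [Int.gcd, Int.natAbs_natCast]
    rw [Nat.gcd_assoc, Nat.gcd_comm]
  have final : ∀ k : ℕ, Int.gcd (a + ((n + k * m : ℕ) : ℤ) * c) (b + ((n + k * m : ℕ) : ℤ) * c)
      = Int.gcd (Int.gcd a b : ℤ) c := by
    intro k
    rw [key, hmain k, rhs]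
  constructor
  · exact ⟨n + 0 * m, final 0⟩
  · intro hpar
    have hdo : Odd d := by
      rcases hpar with ⟨he, ho⟩ | ⟨ho, he⟩
      · exact he.sub_odd ho
      · exact ho.sub_even he
    have hmo : Odd m := by
      rcases (Nat.even_or_odd m) with hme | hmo
      · exfalso
        have : Even d.natAbs := (even_iff_two_dvd.mpr ((even_iff_two_dvd.mp hme).trans hmd))
        rw [Int.natAbs_even] at this
        exact (Int.not_even_iff_odd.mpr hdo) this
      · exact hmo
    rcases Nat.even_or_odd n with hne | hno
    · exact ⟨⟨n + 0 * m, by simpa using hne, final 0⟩,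
        ⟨n + 1 * m, by simpa using hne.add_odd hmo, final 1⟩⟩
    · exact ⟨⟨n + 1 * m, by simpa using hno.add_odd hmo, final 1⟩,
        ⟨n + 0 * m, by simpa using hno, final 0⟩⟩
end

section
/- Let k ≥ 2, let a_1, …, a_k ∈ ℤ and let d ∈ ℤ. Then there exist integers m_1, …, m_k such that gcd(a_1 + m_1·d, a_2 + m_2·d, …, a_k + m_k·d) = gcd(d, a_1, a_2, …, a_k). Moreover, if d is odd, the integers m_1, …, m_k can be chosen so that, in addition, a_i + m_i·d is odd for every 1 ≤ i ≤ k. -/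
private lemma coprime_progression (a b d : ℤ) (ha : a ≠ 0) (h : IsCoprime b d) :
    ∃ n : ℤ, IsCoprime a (b + n * d) := by
  classical
  set S : Finset ℕ := a.natAbs.primeFactors.filter (fun p : ℕ => ¬ (p : ℤ) ∣ b) with hS
  set n : ℤ := S.prod (fun p : ℕ => (p : ℤ)) with hn
  refine ⟨n, ?_⟩
  rw [Int.isCoprime_iff_gcd_eq_one]
  by_contra hg
  obtain ⟨p, pp, hp⟩ := Nat.exists_prime_and_dvd hg
  have hpa : (p : ℤ) ∣ a := dvd_trans (Int.natCast_dvd_natCast.mpr hp) (Int.gcd_dvd_left _ _)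
  have hpv : (p : ℤ) ∣ b + n * d := dvd_trans (Int.natCast_dvd_natCast.mpr hp) (Int.gcd_dvd_right _ _)
  have ppz : Prime (p : ℤ) := Nat.prime_iff_prime_int.mp pp
  by_cases hb : (p : ℤ) ∣ b
  · have hnd : (p : ℤ) ∣ n * d := (dvd_add_right hb).mp hpv
    rcases ppz.dvd_mul.mp hnd with hpn | hpd
    · rw [hn] at hpn
      obtain ⟨q, hq, hpq⟩ := ppz.exists_mem_finset_dvd hpn
      rw [hS, Finset.mem_filter] at hq
      obtain ⟨hq1, hq2⟩ := hq
      have hqp : q.Prime := Nat.prime_of_mem_primeFactors hq1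
      have : p = q := (Nat.prime_dvd_prime_iff_eq pp hqp).mp (Int.natCast_dvd_natCast.mp hpq)
      exact hq2 (this ▸ hb)
    · have : IsUnit ((p : ℤ)) := h.isUnit_of_dvd' hb hpd
      rcases Int.isUnit_iff.mp this with h1 | h1 <;>
        · have := pp.one_lt; omega
  · have hpmem : p ∈ S := by
      rw [hS, Finset.mem_filter]
      exact ⟨Nat.mem_primeFactors.mpr
        ⟨pp, Int.natCast_dvd.mp hpa, Int.natAbs_ne_zero.mpr ha⟩, hb⟩
    have hpn : (p : ℤ) ∣ n := by
      rw [hn]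
      exact Finset.dvd_prod_of_mem _ hpmem
    exact hb (by simpa using hpv.sub (hpn.mul_right d))

private lemma key_lemma (a b d : ℤ) (ha : a ≠ 0) :
    ∃ n : ℤ, gcd a (b + n * d) ∣ d ∧ (Odd d → Odd (b + n * d)) := by
  by_cases h0 : gcd b d = 0
  · rw [gcd_eq_zero_iff] at h0
    refine ⟨0, by simp [h0.1, h0.2], ?_⟩
    intro hd
    rw [h0.2] at hd
    simp [Int.odd_iff] at hd
  · set h : ℤ := gcd b d with hh
    obtain ⟨b', hb'⟩ : h ∣ b := gcd_dvd_left b d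
    obtain ⟨d', hd'⟩ : h ∣ d := gcd_dvd_right b d
    have hcop : IsCoprime b' d' := by
      have h1 : normalize h * gcd b' d' = h := by
        rw [← gcd_mul_left, ← hb', ← hd']
      rw [normalize_gcd] at h1
      have h2 : gcd b' d' = 1 := by
        have := mul_left_cancel₀ h0 (h1.trans (mul_one h).symm)
        exact this
      rw [← Int.coe_gcd] at h2
      exact Int.isCoprime_iff_gcd_eq_one.mpr (by exact_mod_cast h2)
    obtain ⟨n, hn⟩ := coprime_progression (2 * a) b' d' (by simpa using ha) hcop
    have hx : b + n * d = h * (b' + n * d') := by rw [hb', hd']; ring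
    refine ⟨n, ?_, ?_⟩
    · rw [hx]
      have hcopa : IsCoprime (gcd a (h * (b' + n * d'))) (b' + n * d') :=
        (hn.of_mul_left_right).of_isCoprime_of_dvd_left (gcd_dvd_left _ _)
      exact (hcopa.dvd_of_dvd_mul_right (gcd_dvd_right _ _)).trans ⟨d', hd'⟩
    · intro hd
      have hxo : Odd (b' + n * d') := by
        have h2 : IsCoprime (2 : ℤ) (b' + n * d') := hn.of_mul_left_left
        rw [← Int.not_even_iff_odd]
        intro he
        have : IsUnit (2 : ℤ) :=
          h2.isUnit_of_dvd' dvd_rfl (he.two_dvd)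
        norm_num [Int.isUnit_iff] at this
      have hho : Odd h := by
        rcases Int.even_or_odd h with he | ho
        · exfalso
          rw [← Int.not_even_iff_odd] at hd
          exact hd (by rw [hd']; exact he.mul_right d')
        · exact ho
      rw [hx]
      exact hho.mul hxo

private lemma gcd_eq_of (k : ℕ) (a : Fin k → ℤ) (d : ℤ) (m : Fin k → ℤ)
    (i0 i1 : Fin k)
    (hdvd : gcd (a i0 + m i0 * d) (a i1 + m i1 * d) ∣ d) :
    Finset.univ.gcd (fun i => a i + m i * d) = gcd d (Finset.univ.gcd a) := by
  have hn1 : (0 : ℤ) ≤ Finset.univ.gcd (fun i => a i + m i * d) := by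
    rw [← Finset.normalize_gcd]
    exact Int.nonneg_of_normalize_eq_self (normalize_idem _)
  have hn2 : (0 : ℤ) ≤ gcd d (Finset.univ.gcd a) := by
    rw [← Int.coe_gcd]
    exact Int.natCast_nonneg _
  set c : ℤ := Finset.univ.gcd (fun i => a i + m i * d) with hc
  have hcd : c ∣ d :=
    (dvd_gcd (Finset.gcd_dvd (Finset.mem_univ i0)) (Finset.gcd_dvd (Finset.mem_univ i1))).trans
      hdvd
  have hca : ∀ i, c ∣ a i := fun i => by
    have h1 : c ∣ a i + m i * d := Finset.gcd_dvd (Finset.mem_univ i)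
    simpa using h1.sub (hcd.mul_left (m i))
  refine Int.dvd_antisymm hn1 hn2 ?_ ?_
  · exact dvd_gcd hcd (Finset.dvd_gcd fun i _ => hca i)
  · refine Finset.dvd_gcd fun i _ => dvd_add ?_ ?_
    · exact (gcd_dvd_right d _).trans (Finset.gcd_dvd (Finset.mem_univ i))
    · exact (gcd_dvd_left d _).mul_left (m i)

/-- For `k ≥ 2` integers `a₁, …, a_k` and `d ∈ ℤ`, there are `m₁, …, m_k ∈ ℤ` with
`gcd (a₁ + m₁ d, …, a_k + m_k d) = gcd (d, a₁, …, a_k)`; if `d` is odd, the `mᵢ` can be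
chosen so that moreover every `aᵢ + mᵢ d` is odd. -/
theorem gcd_lift_along_multiples (k : ℕ) (hk : 2 ≤ k) (a : Fin k → ℤ) (d : ℤ) :
    (∃ m : Fin k → ℤ,
      Finset.univ.gcd (fun i => a i + m i * d) = gcd d (Finset.univ.gcd a)) ∧
    (Odd d → ∃ m : Fin k → ℤ,
      Finset.univ.gcd (fun i => a i + m i * d) = gcd d (Finset.univ.gcd a) ∧
      ∀ i, Odd (a i + m i * d)) := by
  classical
  have h0k : 0 < k := by omega
  have h1k : 1 < k := by omega
  set i0 : Fin k := ⟨0, h0k⟩ with hi0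
  set i1 : Fin k := ⟨1, h1k⟩ with hi1
  have hne : i1 ≠ i0 := by
    simp [hi0, hi1, Fin.ext_iff]
  constructor
  · by_cases hd0 : d = 0
    · subst hd0
      refine ⟨0, ?_⟩
      rw [gcd_zero_left, ← Finset.normalize_gcd]
      simp
    · set m0 : ℤ := if a i0 = 0 then 1 else 0 with hm0
      have hv0 : a i0 + m0 * d ≠ 0 := by
        by_cases h : a i0 = 0 <;> simp [hm0, h, hd0]
      obtain ⟨n, hn, -⟩ := key_lemma (a i0 + m0 * d) (a i1) d hv0
      set m : Fin k → ℤ := fun i => if i = i0 then m0 else if i = i1 then n else 0 with hm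
      refine ⟨m, gcd_eq_of k a d m i0 i1 ?_⟩
      have e0 : m i0 = m0 := by simp [hm]
      have e1 : m i1 = n := by simp [hm, hne]
      rw [e0, e1]
      exact hn
  · intro hd
    have hd0 : d ≠ 0 := by
      rintro rfl
      simp [Int.odd_iff] at hd
    set m0 : ℤ := if Odd (a i0) then 0 else 1 with hm0
    have hv0odd : Odd (a i0 + m0 * d) := by
      by_cases h : Odd (a i0)
      · simpa [hm0, h] using h
      · rw [Int.not_odd_iff_even] at h
        simpa [hm0, Int.not_odd_iff_even.mpr h] using h.add_odd hd
    have hv0 : a i0 + m0 * d ≠ 0 := by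
      intro h
      rw [h] at hv0odd
      simp [Int.odd_iff] at hv0odd
    obtain ⟨n, hn, hodd⟩ := key_lemma (a i0 + m0 * d) (a i1) d hv0
    set m : Fin k → ℤ := fun i =>
      if i = i0 then m0 else if i = i1 then n else (if Odd (a i) then 0 else 1) with hm
    have e0 : m i0 = m0 := by simp [hm]
    have e1 : m i1 = n := by simp [hm, hne]
    refine ⟨m, gcd_eq_of k a d m i0 i1 (by rw [e0, e1]; exact hn), ?_⟩
    intro i
    by_cases h00 : i = i0
    · subst h00; rw [e0]; exact hv0odd
    · by_cases h11 : i = i1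
      · subst h11; rw [e1]; exact hodd hd
      · by_cases h : Odd (a i)
        · simpa [hm, h00, h11, h] using h
        · rw [Int.not_odd_iff_even] at h
          simpa [hm, h00, h11, Int.not_odd_iff_even.mpr h] using h.add_odd hd
end
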